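/- arXiv:2311.13238 — 9 statements merged into one kernel-verified Lean document; each statement's English description precedes it below -/
import Mathlib

section
/- Let N ≥ 2, d ≥ 1, and consider solutions x_i : [t_a, t_b] → ℝ^d, i = 1,…,N, of the system x_i'(t) = (1/(N-1)) ∑_{j≠i} ψ(x_i(t), x_j(t)) (x_j(t) - x_i(t)), where ψ is continuous, positive, and bounded with 0 < ψ ≤ K. Then for every vector v ∈ ℝ^d and every t ∈ [t_a, t_b] and every i, min_j ⟨x_j(t_a), v⟩ ≤ ⟨x_i(t), v⟩ ≤ max_j ⟨x_j(t_a), v⟩. -/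
open Filter Set Topology

/-- Continuity of a finite sup' of continuous functions. -/
lemma myContinuousOn_sup' {ι : Type*} {s : Finset ι} (hs : s.Nonempty)
    {f : ι → ℝ → ℝ} {S : Set ℝ} (hf : ∀ i ∈ s, ContinuousOn (f i) S) :
    ContinuousOn (fun x => s.sup' hs fun i => f i x) S := by
  induction hs using Finset.Nonempty.cons_induction with
  | singleton i => exact (hf i (by simp)).congr fun x _ => by simp
  | cons i s hi hs ih =>
      simp only [Finset.sup'_cons hs]
      exact (hf i (by simp)).sup (ih fun j hj => hf j (by simp [hj]))

/-- Key scalar lemma: if the derivative at any running maximum is nonpositive,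
then every coordinate stays below the initial maximum. -/
lemma key_sup {N : ℕ} [NeZero N] {ta tb : ℝ} (y g : Fin N → ℝ → ℝ)
    (hderiv : ∀ i, ∀ s ∈ Set.Icc ta tb, HasDerivAt (y i) (g i s) s)
    (hsign : ∀ s ∈ Set.Ico ta tb, ∀ i : Fin N, (∀ j, y j s ≤ y i s) → g i s ≤ 0)
    {t : ℝ} (ht : t ∈ Set.Icc ta tb) (i : Fin N) :
    y i t ≤ Finset.univ.sup' Finset.univ_nonempty (fun j => y j ta) := by
  classical
  have hne : (Finset.univ : Finset (Fin N)).Nonempty := Finset.univ_nonempty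
  set w : ℝ → ℝ := fun s => Finset.univ.sup' hne (fun j => y j s) with hwdef
  have hle_w : ∀ k s, y k s ≤ w s := fun k s =>
    Finset.le_sup' (fun j => y j s) (Finset.mem_univ k)
  have hycontAt : ∀ k, ∀ s ∈ Set.Icc ta tb, ContinuousAt (y k) s := fun k s hs =>
    (hderiv k s hs).continuousAt
  have hwcont : ContinuousOn w (Set.Icc ta tb) :=
    myContinuousOn_sup' hne fun k _ => fun s hs => (hycontAt k s hs).continuousWithinAt
  have hS : ∀ s : ℝ, (Finset.univ.filter fun k : Fin N => ∀ j, y j s ≤ y k s).Nonempty := by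
    intro s
    obtain ⟨k, -, hk⟩ := Finset.exists_max_image Finset.univ (fun j => y j s) hne
    exact ⟨k, Finset.mem_filter.2 ⟨Finset.mem_univ _, fun j => hk j (Finset.mem_univ _)⟩⟩
  set f' : ℝ → ℝ := fun s =>
    (Finset.univ.filter fun k : Fin N => ∀ j, y j s ≤ y k s).sup' (hS s) (fun k => g k s)
    with hf'def
  -- maximizers attain w
  have hSel : ∀ s (k : Fin N), (∀ j, y j s ≤ y k s) → w s = y k s := fun s k hk =>
    le_antisymm (Finset.sup'_le _ _ fun j _ => hk j) (hle_w k s)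
  -- the liminf slope condition
  have hf' : ∀ s ∈ Set.Ico ta tb, ∀ r, f' s < r → ∃ᶠ z in 𝓝[>] s, slope w s z < r := by
    intro s hs r hr
    have hsIcc : s ∈ Set.Icc ta tb := ⟨hs.1, hs.2.le⟩
    obtain ⟨j₀, hj₀mem⟩ := hS s
    have hj₀ : ∀ j, y j s ≤ y j₀ s := (Finset.mem_filter.1 hj₀mem).2
    have hmono : (𝓝[>] s) ≤ (𝓝[≠] s) :=
      nhdsWithin_mono s fun z hz => Set.mem_compl_singleton_iff.2 (ne_of_gt hz)
    -- eventually, maximizer slopes are < r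
    have E1 : ∀ᶠ z in 𝓝[>] s, ∀ k : Fin N, (∀ j, y j s ≤ y k s) → slope (y k) s z < r := by
      rw [eventually_all]
      intro k
      by_cases hk : ∀ j, y j s ≤ y k s
      · have hkr : g k s < r := lt_of_le_of_lt
          (Finset.le_sup' (fun k => g k s)
            (Finset.mem_filter.2 ⟨Finset.mem_univ _, hk⟩)) hr
        have htend : Tendsto (slope (y k) s) (𝓝[>] s) (𝓝 (g k s)) :=
          (hasDerivAt_iff_tendsto_slope.1 (hderiv k s hsIcc)).mono_left hmono
        exact (htend.eventually_lt_const hkr).mono fun z hz _ => hz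
      · exact Filter.Eventually.of_forall fun z h => absurd h hk
    -- eventually, non-maximizers stay strictly below y j₀
    have E2 : ∀ᶠ z in 𝓝[>] s, ∀ k : Fin N, ¬ (∀ j, y j s ≤ y k s) → y k z < y j₀ z := by
      rw [eventually_all]
      intro k
      by_cases hk : ∀ j, y j s ≤ y k s
      · exact Filter.Eventually.of_forall fun z h => absurd hk h
      · push_neg at hk
        obtain ⟨j, hj⟩ := hk
        have hlt : y k s < y j₀ s := lt_of_lt_of_le hj (hj₀ j)
        have h1 : Tendsto (y k) (𝓝[>] s) (𝓝 (y k s)) :=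
          ((hycontAt k s hsIcc).continuousWithinAt).tendsto
        have h2 : Tendsto (y j₀) (𝓝[>] s) (𝓝 (y j₀ s)) :=
          ((hycontAt j₀ s hsIcc).continuousWithinAt).tendsto
        exact (h1.eventually_lt h2 hlt).mono fun z hz _ => hz
    have E3 : ∀ᶠ z in 𝓝[>] s, z ∈ Set.Ioi s := self_mem_nhdsWithin
    refine ((E1.and (E2.and E3)).mono ?_).frequently
    rintro z ⟨h1, h2, h3⟩
    obtain ⟨m, -, hm⟩ := Finset.exists_mem_eq_sup' hne (fun j => y j z)
    have hmS : ∀ j, y j s ≤ y m s := by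
      by_contra hmS
      have hlt := h2 m hmS
      have hle : y j₀ z ≤ w z := hle_w j₀ z
      have hm' : w z = y m z := hm
      rw [hm'] at hle
      exact absurd (lt_of_lt_of_le hlt hle) (lt_irrefl _)
    have hws : w s = y m s := hSel s m hmS
    have hm' : w z = y m z := hm
    have hsl : slope w s z = slope (y m) s z := by
      rw [slope_def_field, slope_def_field, hm', hws]
    rw [hsl]
    exact h1 m hmS
  -- apply the fencing lemma for each ε > 0
  have main : ∀ ε : ℝ, 0 < ε → w t ≤ w ta + ε * Real.exp (t - ta) := by
    intro ε hε
    have hB : ∀ s : ℝ, HasDerivAt (fun u => w ta + ε * Real.exp (u - ta))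
        (ε * Real.exp (s - ta)) s := by
      intro s
      have h1 : HasDerivAt (fun u : ℝ => u - ta) 1 s := (hasDerivAt_id s).sub_const ta
      have h2 : HasDerivAt (fun u : ℝ => Real.exp (u - ta)) (Real.exp (s - ta)) s := by
        have h3 := (Real.hasDerivAt_exp (s - ta)).comp s h1
        rw [mul_one] at h3
        exact h3
      simpa using (h2.const_mul ε).const_add (w ta)
    have bound : ∀ s ∈ Set.Ico ta tb,
        w s = w ta + ε * Real.exp (s - ta) → f' s < ε * Real.exp (s - ta) := by
      intro s hs _
      have hpos : 0 < ε * Real.exp (s - ta) := mul_pos hε (Real.exp_pos _)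
      refine lt_of_le_of_lt ?_ hpos
      refine Finset.sup'_le _ _ fun k hk => ?_
      exact hsign s hs k (Finset.mem_filter.1 hk).2
    have := image_le_of_liminf_slope_right_lt_deriv_boundary hwcont hf'
      (by simp [hε.le] : w ta ≤ w ta + ε * Real.exp (ta - ta)) hB bound ht
    simpa using this
  have hwt : w t ≤ w ta := by
    refine le_of_forall_pos_le_add fun ε hε => ?_
    have hC : 0 < Real.exp (t - ta) := Real.exp_pos _
    have h1 := main (ε / Real.exp (t - ta)) (div_pos hε hC)
    rw [div_mul_cancel₀ _ (ne_of_gt hC)] at h1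
    exact h1
  exact le_trans (hle_w i t) hwt

theorem stmt_2 (N d : ℕ) (hN : 2 ≤ N) (hd : 1 ≤ d)
    (ta tb : ℝ) (hab : ta ≤ tb) (K : ℝ) (hK : 0 < K)
    (ψ : EuclideanSpace ℝ (Fin d) → EuclideanSpace ℝ (Fin d) → ℝ)
    (hψc : Continuous fun p : EuclideanSpace ℝ (Fin d) × EuclideanSpace ℝ (Fin d) => ψ p.1 p.2)
    (hψpos : ∀ y z, 0 < ψ y z) (hψK : ∀ y z, ψ y z ≤ K)
    (x : Fin N → ℝ → EuclideanSpace ℝ (Fin d))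
    (hdyn : ∀ i, ∀ s ∈ Set.Icc ta tb, HasDerivAt (x i)
      (((N : ℝ) - 1)⁻¹ • ∑ j ∈ Finset.univ.erase i, ψ (x i s) (x j s) • (x j s - x i s)) s)
    (v : EuclideanSpace ℝ (Fin d)) (t : ℝ) (ht : t ∈ Set.Icc ta tb) (i : Fin N) :
    (⨅ j : Fin N, (inner ℝ (x j ta) v : ℝ)) ≤ (inner ℝ (x i t) v : ℝ) ∧
      (inner ℝ (x i t) v : ℝ) ≤ ⨆ j : Fin N, (inner ℝ (x j ta) v : ℝ) := by
  classical
  haveI : NeZero N := ⟨by omega⟩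
  have hN1 : (0:ℝ) < (N:ℝ) - 1 := by
    have : (2:ℝ) ≤ (N:ℝ) := by exact_mod_cast hN
    linarith
  -- derivative of projections, for any direction u
  have hder : ∀ (u : EuclideanSpace ℝ (Fin d)) (k : Fin N), ∀ s ∈ Set.Icc ta tb,
      HasDerivAt (fun s => (inner ℝ (x k s) u : ℝ))
        (((N : ℝ) - 1)⁻¹ * ∑ j ∈ Finset.univ.erase k, ψ (x k s) (x j s) *
          ((inner ℝ (x j s) u : ℝ) - (inner ℝ (x k s) u : ℝ))) s := by
    intro u k s hs
    have h1 := (hdyn k s hs).inner ℝ (hasDerivAt_const s u)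
    have heq : (inner ℝ (x k s) (0 : EuclideanSpace ℝ (Fin d)) : ℝ) +
        (inner ℝ (((N : ℝ) - 1)⁻¹ • ∑ j ∈ Finset.univ.erase k,
          ψ (x k s) (x j s) • (x j s - x k s)) u : ℝ)
        = ((N : ℝ) - 1)⁻¹ * ∑ j ∈ Finset.univ.erase k, ψ (x k s) (x j s) *
          ((inner ℝ (x j s) u : ℝ) - (inner ℝ (x k s) u : ℝ)) := by
      rw [inner_zero_right, real_inner_smul_left, sum_inner]
      simp only [real_inner_smul_left, inner_sub_left]
      ring
    rw [heq] at h1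
    exact h1
  -- the sign condition for any direction u
  have hsign : ∀ (u : EuclideanSpace ℝ (Fin d)), ∀ s ∈ Set.Ico ta tb, ∀ k : Fin N,
      (∀ j : Fin N, (inner ℝ (x j s) u : ℝ) ≤ (inner ℝ (x k s) u : ℝ)) →
      (((N : ℝ) - 1)⁻¹ * ∑ j ∈ Finset.univ.erase k, ψ (x k s) (x j s) *
        ((inner ℝ (x j s) u : ℝ) - (inner ℝ (x k s) u : ℝ))) ≤ 0 := by
    intro u s _ k hk
    have hsum : (∑ j ∈ Finset.univ.erase k, ψ (x k s) (x j s) *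
        ((inner ℝ (x j s) u : ℝ) - (inner ℝ (x k s) u : ℝ))) ≤ 0 := by
      refine Finset.sum_nonpos fun j _ => ?_
      exact mul_nonpos_of_nonneg_of_nonpos (hψpos _ _).le (by linarith [hk j])
    exact mul_nonpos_of_nonneg_of_nonpos (inv_nonneg.2 hN1.le) hsum
  have hne : (Finset.univ : Finset (Fin N)).Nonempty := Finset.univ_nonempty
  constructor
  · -- lower bound via -v
    have hkey := key_sup (fun k s => (inner ℝ (x k s) (-v) : ℝ))
      (fun k s => ((N : ℝ) - 1)⁻¹ * ∑ j ∈ Finset.univ.erase k, ψ (x k s) (x j s) *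
        ((inner ℝ (x j s) (-v) : ℝ) - (inner ℝ (x k s) (-v) : ℝ)))
      (fun k s hs => hder (-v) k s hs) (hsign (-v)) ht i
    obtain ⟨j₀, -, hj₀⟩ := Finset.exists_mem_eq_sup' Finset.univ_nonempty
      (fun j : Fin N => (inner ℝ (x j ta) (-v) : ℝ))
    rw [hj₀] at hkey
    simp only [inner_neg_right, neg_le_neg_iff] at hkey
    calc (⨅ j : Fin N, (inner ℝ (x j ta) v : ℝ)) ≤ (inner ℝ (x j₀ ta) v : ℝ) :=
          ciInf_le (f := fun j : Fin N => (inner ℝ (x j ta) v : ℝ)) (Set.Finite.bddBelow (Set.finite_range _)) j₀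
      _ ≤ (inner ℝ (x i t) v : ℝ) := hkey
  · -- upper bound
    have hkey := key_sup (fun k s => (inner ℝ (x k s) v : ℝ))
      (fun k s => ((N : ℝ) - 1)⁻¹ * ∑ j ∈ Finset.univ.erase k, ψ (x k s) (x j s) *
        ((inner ℝ (x j s) v : ℝ) - (inner ℝ (x k s) v : ℝ)))
      (fun k s hs => hder v k s hs) (hsign v) ht i
    obtain ⟨j₀, -, hj₀⟩ := Finset.exists_mem_eq_sup' Finset.univ_nonempty
      (fun j : Fin N => (inner ℝ (x j ta) v : ℝ))
    rw [hj₀] at hkey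
    calc (inner ℝ (x i t) v : ℝ) ≤ (inner ℝ (x j₀ ta) v : ℝ) := hkey
      _ ≤ ⨆ j : Fin N, (inner ℝ (x j ta) v : ℝ) :=
          le_ciSup (f := fun j : Fin N => (inner ℝ (x j ta) v : ℝ)) (Set.Finite.bddAbove (Set.finite_range _)) j₀
end

section
/- Under the Hegselmann–Krause dynamics with positive interaction (α ≡ 1) on [t_a, t_b] with positive bounded influence function ψ ≤ K, for all i, j = 1,…,N and all s, t ∈ [t_a, t_b], |x_i(s) - x_j(t)| ≤ d(t_a), where d(t) := max_{i,j} |x_i(t) - x_j(t)|. In particular d(t_b) ≤ d(t_a). -/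
open Set Filter Finset
open scoped Topology RealInnerProductSpace

theorem stmt_3 (N d : ℕ) (hN : 2 ≤ N) (hd : 1 ≤ d)
    (ta tb : ℝ) (hab : ta ≤ tb) (K : ℝ) (hK : 0 < K)
    (ψ : EuclideanSpace ℝ (Fin d) → EuclideanSpace ℝ (Fin d) → ℝ)
    (hψc : Continuous fun p : EuclideanSpace ℝ (Fin d) × EuclideanSpace ℝ (Fin d) => ψ p.1 p.2)
    (hψpos : ∀ y z, 0 < ψ y z) (hψK : ∀ y z, ψ y z ≤ K)
    (x : Fin N → ℝ → EuclideanSpace ℝ (Fin d))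
    (hdyn : ∀ i, ∀ s ∈ Set.Icc ta tb, HasDerivAt (x i)
      (((N : ℝ) - 1)⁻¹ • ∑ j ∈ Finset.univ.erase i, ψ (x i s) (x j s) • (x j s - x i s)) s) :
    (∀ i j : Fin N, ∀ s ∈ Set.Icc ta tb, ∀ t ∈ Set.Icc ta tb,
        ‖x i s - x j t‖ ≤ ⨆ p : Fin N × Fin N, ‖x p.1 ta - x p.2 ta‖) ∧
      (⨆ p : Fin N × Fin N, ‖x p.1 tb - x p.2 tb‖) ≤
        ⨆ p : Fin N × Fin N, ‖x p.1 ta - x p.2 ta‖ := by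
  haveI : NeZero N := ⟨by omega⟩
  have hU : (Finset.univ : Finset (Fin N)).Nonempty := Finset.univ_nonempty
  have hNinv : (0:ℝ) ≤ ((N : ℝ) - 1)⁻¹ := by
    have h2 : (2:ℝ) ≤ (N:ℝ) := by exact_mod_cast hN
    have : (0:ℝ) < (N:ℝ) - 1 := by linarith
    positivity
  set vel : Fin N → ℝ → EuclideanSpace ℝ (Fin d) := fun i s =>
    ((N : ℝ) - 1)⁻¹ • ∑ j ∈ Finset.univ.erase i, ψ (x i s) (x j s) • (x j s - x i s) with hvel
  -- Key monotonicity lemma: for any direction v, the max projection is nonincreasing.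
  have key : ∀ v : EuclideanSpace ℝ (Fin d), ∀ t ∈ Set.Icc ta tb,
      (Finset.univ.sup' hU fun i => ⟪v, x i t⟫) ≤
        Finset.univ.sup' hU fun i => ⟪v, x i ta⟫ := by
    intro v t ht
    set g : Fin N → ℝ → ℝ := fun i τ => ⟪v, x i τ⟫ with hgdef
    set f : ℝ → ℝ := fun τ => Finset.univ.sup' hU fun i => g i τ with hfdef
    have hg : ∀ i, ∀ τ ∈ Set.Icc ta tb, HasDerivAt (g i) (⟪v, vel i τ⟫) τ := by
      intro i τ hτ
      have h := (hasDerivAt_const τ v).inner ℝ (hdyn i τ hτ)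
      simpa [hgdef, hvel] using h
    have hgc : ∀ i, ∀ τ ∈ Set.Icc ta tb, ContinuousAt (g i) τ :=
      fun i τ hτ => (hg i τ hτ).continuousAt
    have hfc : ContinuousOn f (Set.Icc ta tb) :=
      ContinuousOn.finset_sup'_apply hU
        (fun i _ => fun τ hτ => (hgc i τ hτ).continuousWithinAt)
    have bound : ∀ τ ∈ Set.Ico ta tb, ∀ r, (0:ℝ) < r →
        ∃ᶠ z in 𝓝[>] τ, slope f τ z < r := by
      intro τ hτ r hr
      have hτ' : τ ∈ Set.Icc ta tb := Set.Ico_subset_Icc_self hτ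
      set S : Finset (Fin N) := Finset.univ.filter (fun i => g i τ = f τ) with hS
      obtain ⟨i0, -, hi0⟩ := Finset.exists_mem_eq_sup' hU (fun i => g i τ)
      have hi0f : g i0 τ = f τ := hi0.symm
      have hi0S : i0 ∈ S := by simp [hS, hi0f]
      have hDle : ∀ i ∈ S, ⟪v, vel i τ⟫ ≤ 0 := by
        intro i hi
        have hiτ : g i τ = f τ := by simpa [hS] using hi
        have hexp : ⟪v, vel i τ⟫
            = ((N:ℝ)-1)⁻¹ * ∑ j ∈ Finset.univ.erase i,
                ψ (x i τ) (x j τ) * (g j τ - g i τ) := by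
          simp [hvel, inner_smul_right, inner_sum, inner_sub_right, hgdef]
        rw [hexp]
        apply mul_nonpos_of_nonneg_of_nonpos hNinv
        apply Finset.sum_nonpos
        intro j hj
        apply mul_nonpos_of_nonneg_of_nonpos (hψpos _ _).le
        have hjle : g j τ ≤ f τ := Finset.le_sup' (fun i => g i τ) (Finset.mem_univ j)
        linarith
      have e1 : ∀ᶠ z in 𝓝[>] τ, ∀ i ∈ S, slope (g i) τ z < r := by
        rw [Finset.eventually_all]
        intro i hi
        have htend : Tendsto (slope (g i) τ) (𝓝[>] τ) (𝓝 (⟪v, vel i τ⟫)) :=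
          (hasDerivAt_iff_tendsto_slope.mp (hg i τ hτ')).mono_left
            (nhdsWithin_mono τ (fun z hz =>
              Set.mem_compl_singleton_iff.mpr (ne_of_gt hz)))
        exact htend.eventually_lt_const (lt_of_le_of_lt (hDle i hi) hr)
      have e2 : ∀ᶠ z in 𝓝[>] τ, ∀ i, i ∉ S → g i z < g i0 z := by
        rw [Filter.eventually_all]
        intro i
        by_cases hiS : i ∈ S
        · exact Filter.Eventually.of_forall fun z h => absurd hiS h
        · have hlt : g i τ < g i0 τ := by
            have hle : g i τ ≤ f τ := Finset.le_sup' (fun i => g i τ) (Finset.mem_univ i)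
            have hne : g i τ ≠ f τ := by simpa [hS] using hiS
            rw [hi0f]
            exact lt_of_le_of_ne hle hne
          have hev := (hgc i τ hτ').eventually_lt (hgc i0 τ hτ') hlt
          exact ((hev).filter_mono nhdsWithin_le_nhds).mono fun z h _ => h
      refine Filter.Eventually.frequently ?_
      filter_upwards [e1, e2, self_mem_nhdsWithin] with z h1 h2 hz
      have hzτ : (0:ℝ) < z - τ := sub_pos.mpr hz
      have hb : ∀ i ∈ S, g i z < f τ + r * (z - τ) := by
        intro i hi
        have hs := h1 i hi
        rw [slope_def_field, div_lt_iff₀ hzτ] at hs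
        have hiτ : g i τ = f τ := by simpa [hS] using hi
        linarith
      have hfz : f z < f τ + r * (z - τ) := by
        refine (Finset.sup'_lt_iff hU).mpr ?_
        intro i _
        by_cases hiS : i ∈ S
        · exact hb i hiS
        · exact lt_trans (h2 i hiS) (hb i0 hi0S)
      rw [slope_def_field, div_lt_iff₀ hzτ]
      linarith
    exact image_le_of_liminf_slope_right_le_deriv_boundary (f := f)
      (B := fun _ => f ta) (B' := fun _ => (0:ℝ)) hfc le_rfl continuousOn_const
      (fun τ _ => hasDerivWithinAt_const τ _ (f ta)) bound ht
  -- Assembly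
  have hbdd : BddAbove (Set.range fun p : Fin N × Fin N => ‖x p.1 ta - x p.2 ta‖) :=
    (Set.finite_range _).bddAbove
  have hd0 : (0:ℝ) ≤ ⨆ p : Fin N × Fin N, ‖x p.1 ta - x p.2 ta‖ := by
    have h := le_ciSup hbdd ((⟨0, by omega⟩, ⟨0, by omega⟩) : Fin N × Fin N)
    simpa using h
  have hmain : ∀ i j : Fin N, ∀ s ∈ Set.Icc ta tb, ∀ t ∈ Set.Icc ta tb,
      ‖x i s - x j t‖ ≤ ⨆ p : Fin N × Fin N, ‖x p.1 ta - x p.2 ta‖ := by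
    intro i j s hs t ht
    rcases eq_or_ne (x i s - x j t) 0 with hw | hw
    · rw [hw, norm_zero]; exact hd0
    · set w : EuclideanSpace ℝ (Fin d) := x i s - x j t with hwdef
      set v : EuclideanSpace ℝ (Fin d) := ‖w‖⁻¹ • w with hv
      have hwne : ‖w‖ ≠ 0 := norm_ne_zero_iff.mpr hw
      have hvw : ⟪v, w⟫ = ‖w‖ := by
        rw [hv, real_inner_smul_left, real_inner_self_eq_norm_mul_norm]
        field_simp
      have h1 : ⟪v, x i s⟫ ≤ Finset.univ.sup' hU fun k => ⟪v, x k ta⟫ :=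
        le_trans (Finset.le_sup' (fun k => ⟪v, x k s⟫) (Finset.mem_univ i)) (key v s hs)
      have h2 : ⟪-v, x j t⟫ ≤ Finset.univ.sup' hU fun k => ⟪-v, x k ta⟫ :=
        le_trans (Finset.le_sup' (fun k => ⟪-v, x k t⟫) (Finset.mem_univ j)) (key (-v) t ht)
      obtain ⟨p, -, hp⟩ := Finset.exists_mem_eq_sup' hU fun k => ⟪v, x k ta⟫
      obtain ⟨q, -, hq⟩ := Finset.exists_mem_eq_sup' hU fun k => ⟪-v, x k ta⟫
      have hv1 : ‖v‖ = 1 := by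
        rw [hv, norm_smul, norm_inv, norm_norm, inv_mul_cancel₀ hwne]
      have hCS : ⟪v, x p ta - x q ta⟫ ≤ ‖x p ta - x q ta‖ := by
        have h := real_inner_le_norm v (x p ta - x q ta)
        rwa [hv1, one_mul] at h
      have hsum : ⟪v, w⟫ ≤ ⟪v, x p ta - x q ta⟫ := by
        have e1 : ⟪v, w⟫ = ⟪v, x i s⟫ + ⟪-v, x j t⟫ := by
          rw [hwdef]
          simp [inner_sub_right, inner_neg_left]; ring
        have e2 : ⟪v, x p ta - x q ta⟫ = ⟪v, x p ta⟫ + ⟪-v, x q ta⟫ := by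
          simp [inner_sub_right, inner_neg_left]; ring
        rw [e1, e2]
        exact add_le_add (h1.trans_eq hp) (h2.trans_eq hq)
      have hle : ‖x p ta - x q ta‖ ≤ ⨆ p : Fin N × Fin N, ‖x p.1 ta - x p.2 ta‖ :=
        le_ciSup hbdd (p, q)
      calc ‖x i s - x j t‖ = ⟪v, w⟫ := hvw.symm
        _ ≤ ⟪v, x p ta - x q ta⟫ := hsum
        _ ≤ ‖x p ta - x q ta‖ := hCS
        _ ≤ _ := hle
  refine ⟨hmain, ?_⟩
  exact ciSup_le fun p => hmain p.1 p.2 tb ⟨hab, le_rfl⟩ tb ⟨hab, le_rfl⟩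
end

section
/- Under the Hegselmann–Krause dynamics with negative interaction (α ≡ -1) on [t_a, t_b], i.e., x_i'(t) = -(1/(N-1)) ∑_{j≠i} ψ(x_i(t), x_j(t)) (x_j(t) - x_i(t)) with 0 < ψ ≤ K, for every v ∈ ℝ^d, every t ∈ [t_a, t_b], and every i, min_j ⟨x_j(t_b), v⟩ ≤ ⟨x_i(t), v⟩ ≤ max_j ⟨x_j(t_b), v⟩. -/
open Set Finset Filter Topology

lemma aux_sup_bound {N : ℕ} (f f' : Fin N → ℝ → ℝ) {ta tb : ℝ}
    (hderiv : ∀ j, ∀ s ∈ Set.Icc ta tb, HasDerivAt (f j) (f' j s) s)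
    (hpos : ∀ s ∈ Set.Icc ta tb, ∀ j, (∀ k, f k s ≤ f j s) → 0 ≤ f' j s)
    {t : ℝ} (ht : t ∈ Set.Icc ta tb) (i : Fin N) :
    f i t ≤ ⨆ j, f j tb := by
  haveI : Nonempty (Fin N) := ⟨i⟩
  have ne : (Finset.univ : Finset (Fin N)).Nonempty := ⟨i, Finset.mem_univ i⟩
  set M : ℝ → ℝ := fun s => Finset.univ.sup' ne (fun j => f j s) with hM
  have hcontf : ∀ j, ∀ s ∈ Set.Icc ta tb, ContinuousAt (f j) s :=
    fun j s hs => (hderiv j s hs).continuousAt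
  set φ : ℝ → ℝ := fun z => ta + tb - z with hφ
  have hφz : ∀ z, φ z = ta + tb - z := fun _ => rfl
  have hφc : Continuous φ := by
    rw [hφ]; continuity
  set u : ℝ → ℝ := fun z => M (φ z) with hu
  have huz' : ∀ z, u z = Finset.univ.sup' ne (fun j => f j (φ z)) := fun _ => rfl
  -- continuity of u
  have hucont : ContinuousOn u (Set.Icc ta tb) := by
    have : ∀ z ∈ Set.Icc ta tb, ContinuousWithinAt u (Set.Icc ta tb) z := by
      intro z hz
      have hmem : φ z ∈ Set.Icc ta tb := by
        rw [hφz]; exact ⟨by linarith [hz.2], by linarith [hz.1]⟩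
      have : ContinuousAt u z := by
        apply ContinuousAt.finset_sup'_apply ne
        intro j _
        exact (hcontf j (φ z) hmem).comp hφc.continuousAt
      exact this.continuousWithinAt
    exact this
  have key : ∀ z ∈ Set.Icc ta tb, u z ≤ M tb := by
    intro z0 hz0
    refine image_le_of_liminf_slope_right_le_deriv_boundary (f := u) (a := ta) (b := tb)
      (B := fun _ => M tb) (B' := fun _ => 0) hucont ?ha continuousOn_const
      (fun x _ => hasDerivWithinAt_const x _ _) ?bound hz0
    case ha =>
      have : φ ta = tb := by rw [hφz]; ring
      rw [huz', this]
    case bound =>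
      intro x hx r hr
      have hr0 : (0:ℝ) < r := hr
      have hx'mem : φ x ∈ Set.Icc ta tb := by
        rw [hφz]; exact ⟨by linarith [hx.2], by linarith [hx.1]⟩
      set A : Finset (Fin N) := Finset.univ.filter (fun k => f k (φ x) = M (φ x)) with hA
      obtain ⟨k0, _, hk0⟩ := Finset.exists_mem_eq_sup' ne (fun j => f j (φ x))
      have hAne : A.Nonempty := ⟨k0, by simp [hA, hk0.symm]; rfl⟩
      have hAmax : ∀ k ∈ A, f k (φ x) = M (φ x) := by
        intro k hk; simpa [hA] using hk
      -- eventualities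
      have E1 : ∀ᶠ z in 𝓝[>] x, z ∈ Set.Ioc x tb :=
        Ioc_mem_nhdsGT_of_mem ⟨le_refl x, hx.2⟩
      have hmapφ : Filter.Tendsto φ (𝓝[>] x) (𝓝[≠] (φ x)) := by
        apply Filter.Tendsto.mono_right _ (nhdsWithin_mono (φ x) (s := Set.Iio (φ x)) (fun y hy => ne_of_lt hy))
        rw [tendsto_nhdsWithin_iff]
        constructor
        · exact (hφc.tendsto x).mono_left nhdsWithin_le_nhds
        · filter_upwards [eventually_mem_nhdsWithin] with z hz
          have hxz : x < z := hz
          show φ z < φ x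
          rw [hφz z, hφz x]
          linarith
      have E2 : ∀ᶠ z in 𝓝[>] x, ∀ k, k ∈ A → -r < slope (f k) (φ x) (φ z) := by
        rw [Filter.eventually_all]
        intro k
        by_cases hk : k ∈ A
        swap
        · filter_upwards with z hk'; exact absurd hk' hk
        · have hkd : 0 ≤ f' k (φ x) := by
            apply hpos (φ x) hx'mem k
            intro m
            have h1 : f m (φ x) ≤ M (φ x) := Finset.le_sup' (fun j => f j (φ x)) (Finset.mem_univ m)
            have h2 := hAmax k hk
            linarith
          have htend : Filter.Tendsto (slope (f k) (φ x)) (𝓝[≠] (φ x)) (𝓝 (f' k (φ x))) :=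
            hasDerivAt_iff_tendsto_slope.1 (hderiv k (φ x) hx'mem)
          filter_upwards [hmapφ.eventually (htend.eventually_const_lt (show -r < f' k (φ x) by linarith))] with z h _
          exact h
      have E3 : ∀ᶠ z in 𝓝[>] x, ∀ k, k ∉ A →
          f k (φ z) < A.sup' hAne (fun j => f j (φ z)) := by
        rw [Filter.eventually_all]
        intro k
        by_cases hk : k ∉ A
        swap
        · push_neg at hk
          filter_upwards with z hk'; exact absurd hk hk'
        · have hlt : f k (φ x) < A.sup' hAne (fun j => f j (φ x)) := by
            have h1 : f k (φ x) ≤ M (φ x) := Finset.le_sup' (fun j => f j (φ x)) (Finset.mem_univ k)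
            have h2 : ¬ (f k (φ x) = M (φ x)) := by simpa [hA] using hk
            obtain ⟨k1, hk1A⟩ := id hAne
            have h4 : M (φ x) ≤ A.sup' hAne (fun j => f j (φ x)) := by
              calc M (φ x) = f k1 (φ x) := (hAmax k1 hk1A).symm
              _ ≤ _ := Finset.le_sup' (fun j => f j (φ x)) hk1A
            rcases lt_or_eq_of_le h1 with h | h
            · linarith
            · exact absurd h h2
          have hc1 : ContinuousAt (fun z => f k (φ z)) x :=
            (hcontf k (φ x) hx'mem).comp hφc.continuousAt
          have hc2 : ContinuousAt (fun z => A.sup' hAne (fun j => f j (φ z))) x := by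
            apply ContinuousAt.finset_sup'_apply hAne
            intro j _
            exact (hcontf j (φ x) hx'mem).comp hφc.continuousAt
          filter_upwards [(hc1.eventually_lt hc2 hlt).filter_mono nhdsWithin_le_nhds] with z h _
          exact h
      apply Filter.Eventually.frequently
      filter_upwards [E1, E2, E3] with z hz1 hz2 hz3
      have huzA : u z = A.sup' hAne (fun j => f j (φ z)) := by
        rw [huz']
        apply le_antisymm
        · apply Finset.sup'_le
          intro k _
          by_cases hk : k ∈ A
          · exact Finset.le_sup' (fun j => f j (φ z)) hk
          · exact le_of_lt (hz3 k hk)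
        · apply Finset.sup'_le
          intro k _
          exact Finset.le_sup' (fun j => f j (φ z)) (Finset.mem_univ k)
      obtain ⟨k1, hk1A, hk1⟩ := Finset.exists_mem_eq_sup' hAne (fun j => f j (φ z))
      have hux : u x = f k1 (φ x) := by
        have h := hAmax k1 hk1A
        rw [hu]
        simp only []
        rw [← h]
      have hslope : slope u x z = - slope (f k1) (φ x) (φ z) := by
        rw [slope_def_field, slope_def_field, huzA, hk1, hux]
        have hzz' : φ z - φ x = -(z - x) := by rw [hφz, hφz]; ring
        rw [hzz', div_neg]
        ring
      rw [hslope]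
      have := hz2 k1 hk1A
      linarith
  -- conclude
  have h1 : f i t ≤ M t := Finset.le_sup' (fun j => f j t) (Finset.mem_univ i)
  have h2 : M t ≤ M tb := by
    have hmem : ta + tb - t ∈ Set.Icc ta tb := ⟨by linarith [ht.2], by linarith [ht.1]⟩
    have := key (ta + tb - t) hmem
    have hφt : φ (ta + tb - t) = t := by rw [hφz]; ring
    rw [hu] at this
    simp only [hφt] at this
    exact this
  calc f i t ≤ M tb := h1.trans h2
  _ = ⨆ j, f j tb := Finset.sup'_univ_eq_ciSup _

theorem stmt_4 (N d : ℕ) (hN : 2 ≤ N) (hd : 1 ≤ d)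
    (ta tb : ℝ) (hab : ta ≤ tb) (K : ℝ) (hK : 0 < K)
    (ψ : EuclideanSpace ℝ (Fin d) → EuclideanSpace ℝ (Fin d) → ℝ)
    (hψc : Continuous fun p : EuclideanSpace ℝ (Fin d) × EuclideanSpace ℝ (Fin d) => ψ p.1 p.2)
    (hψpos : ∀ y z, 0 < ψ y z) (hψK : ∀ y z, ψ y z ≤ K)
    (x : Fin N → ℝ → EuclideanSpace ℝ (Fin d))
    (hdyn : ∀ i, ∀ s ∈ Set.Icc ta tb, HasDerivAt (x i)
      (-(((N : ℝ) - 1)⁻¹ • ∑ j ∈ Finset.univ.erase i, ψ (x i s) (x j s) • (x j s - x i s))) s)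
    (v : EuclideanSpace ℝ (Fin d)) (t : ℝ) (ht : t ∈ Set.Icc ta tb) (i : Fin N) :
    (⨅ j : Fin N, (inner ℝ (x j tb) v : ℝ)) ≤ (inner ℝ (x i t) v : ℝ) ∧
      (inner ℝ (x i t) v : ℝ) ≤ ⨆ j : Fin N, (inner ℝ (x j tb) v : ℝ) := by
  have h2 : (2:ℝ) ≤ (N:ℝ) := by exact_mod_cast hN
  have hc : (0:ℝ) ≤ ((N:ℝ) - 1)⁻¹ := inv_nonneg.2 (by linarith)
  have comp : ∀ (w : EuclideanSpace ℝ (Fin d)) (j : Fin N) (s : ℝ),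
      (inner ℝ (-(((N : ℝ) - 1)⁻¹ • ∑ k ∈ Finset.univ.erase j, ψ (x j s) (x k s) • (x k s - x j s))) w : ℝ)
      = -(((N:ℝ)-1)⁻¹ * ∑ k ∈ Finset.univ.erase j,
          ψ (x j s) (x k s) * ((inner ℝ (x k s) w : ℝ) - (inner ℝ (x j s) w : ℝ))) := by
    intro w j s
    rw [inner_neg_left, real_inner_smul_left, sum_inner]
    congr 2
    apply Finset.sum_congr rfl
    intro k _
    rw [real_inner_smul_left, inner_sub_left]
  have hderiv : ∀ (w : EuclideanSpace ℝ (Fin d)) (j : Fin N), ∀ s ∈ Set.Icc ta tb,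
      HasDerivAt (fun s => (inner ℝ (x j s) w : ℝ))
        ((inner ℝ (-(((N : ℝ) - 1)⁻¹ • ∑ k ∈ Finset.univ.erase j,
            ψ (x j s) (x k s) • (x k s - x j s))) w : ℝ)) s := by
    intro w j s hs
    have h := HasDerivAt.inner ℝ (hdyn j s hs) (hasDerivAt_const s w)
    simpa using h
  constructor
  · -- lower bound, via -v
    have hpos : ∀ s ∈ Set.Icc ta tb, ∀ j : Fin N,
        (∀ k : Fin N, (inner ℝ (x k s) (-v) : ℝ) ≤ (inner ℝ (x j s) (-v) : ℝ)) →
        0 ≤ (inner ℝ (-(((N : ℝ) - 1)⁻¹ • ∑ k ∈ Finset.univ.erase j,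
            ψ (x j s) (x k s) • (x k s - x j s))) (-v) : ℝ) := by
      intro s _ j hmax
      rw [comp]
      have hsum : ∑ k ∈ Finset.univ.erase j,
          ψ (x j s) (x k s) * ((inner ℝ (x k s) (-v) : ℝ) - (inner ℝ (x j s) (-v) : ℝ)) ≤ 0 := by
        apply Finset.sum_nonpos
        intro k _
        exact mul_nonpos_of_nonneg_of_nonpos (hψpos _ _).le (by linarith [hmax k])
      nlinarith
    have hb := aux_sup_bound (fun j s => (inner ℝ (x j s) (-v) : ℝ))
      (fun j s => (inner ℝ (-(((N : ℝ) - 1)⁻¹ • ∑ k ∈ Finset.univ.erase j,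
            ψ (x j s) (x k s) • (x k s - x j s))) (-v) : ℝ))
      (hderiv (-v)) hpos ht i
    have hneg : ∀ a : EuclideanSpace ℝ (Fin d), (inner ℝ a (-v) : ℝ) = -(inner ℝ a v : ℝ) :=
      fun a => inner_neg_right a v
    rw [hneg] at hb
    haveI : Nonempty (Fin N) := ⟨i⟩
    have ne : (Finset.univ : Finset (Fin N)).Nonempty := Finset.univ_nonempty
    have hsup : (⨆ j, (inner ℝ (x j tb) (-v) : ℝ)) = -(⨅ j, (inner ℝ (x j tb) v : ℝ)) := by
      rw [← Finset.sup'_univ_eq_ciSup, ← Finset.inf'_univ_eq_ciInf]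
      apply le_antisymm
      · apply Finset.sup'_le
        intro k _
        rw [hneg, neg_le_neg_iff]
        exact Finset.inf'_le _ (Finset.mem_univ k)
      · obtain ⟨k, _, hk⟩ := Finset.exists_mem_eq_inf' ne (fun j => (inner ℝ (x j tb) v : ℝ))
        rw [hk]
        calc -(inner ℝ (x k tb) v : ℝ) = (inner ℝ (x k tb) (-v) : ℝ) := (hneg _).symm
        _ ≤ _ := Finset.le_sup' (fun j => (inner ℝ (x j tb) (-v) : ℝ)) (Finset.mem_univ k)
    rw [hsup] at hb
    linarith
  · -- upper bound
    have hpos : ∀ s ∈ Set.Icc ta tb, ∀ j : Fin N,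
        (∀ k : Fin N, (inner ℝ (x k s) v : ℝ) ≤ (inner ℝ (x j s) v : ℝ)) →
        0 ≤ (inner ℝ (-(((N : ℝ) - 1)⁻¹ • ∑ k ∈ Finset.univ.erase j,
            ψ (x j s) (x k s) • (x k s - x j s))) v : ℝ) := by
      intro s _ j hmax
      rw [comp]
      have hsum : ∑ k ∈ Finset.univ.erase j,
          ψ (x j s) (x k s) * ((inner ℝ (x k s) v : ℝ) - (inner ℝ (x j s) v : ℝ)) ≤ 0 := by
        apply Finset.sum_nonpos
        intro k _
        exact mul_nonpos_of_nonneg_of_nonpos (hψpos _ _).le (by linarith [hmax k])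
      nlinarith
    exact aux_sup_bound (fun j s => (inner ℝ (x j s) v : ℝ))
      (fun j s => (inner ℝ (-(((N : ℝ) - 1)⁻¹ • ∑ k ∈ Finset.univ.erase j,
            ψ (x j s) (x k s) • (x k s - x j s))) v : ℝ))
      (hderiv v) hpos ht i
end

section
/- Under the Hegselmann–Krause dynamics with negative interaction (α ≡ -1) on [t_a, t_b] with 0 < ψ ≤ K, for all i, j and all s, t ∈ [t_a, t_b], |x_i(s) - x_j(t)| ≤ d(t_b), where d(t) = max_{i,j} |x_i(t) - x_j(t)|. In particular, d(t_a) ≤ d(t_b). -/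
open Set Filter Topology RealInnerProductSpace

lemma aux_continuousOn_inf' {ι : Type*} {s : Finset ι} (hs : s.Nonempty)
    {f : ι → ℝ → ℝ} {U : Set ℝ} (hf : ∀ i, ContinuousOn (f i) U) :
    ContinuousOn (fun t => s.inf' hs fun i => f i t) U := by
  induction hs using Finset.Nonempty.cons_induction with
  | singleton i => exact hf i
  | cons i s his hs ih =>
      simp only [Finset.inf'_cons (H := hs)]
      exact (hf i).inf ih

theorem stmt_5 (N d : ℕ) (hN : 2 ≤ N) (hd : 1 ≤ d)
    (ta tb : ℝ) (hab : ta ≤ tb) (K : ℝ) (hK : 0 < K)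
    (ψ : EuclideanSpace ℝ (Fin d) → EuclideanSpace ℝ (Fin d) → ℝ)
    (hψc : Continuous fun p : EuclideanSpace ℝ (Fin d) × EuclideanSpace ℝ (Fin d) => ψ p.1 p.2)
    (hψpos : ∀ y z, 0 < ψ y z) (hψK : ∀ y z, ψ y z ≤ K)
    (x : Fin N → ℝ → EuclideanSpace ℝ (Fin d))
    (hdyn : ∀ i, ∀ s ∈ Set.Icc ta tb, HasDerivAt (x i)
      (-(((N : ℝ) - 1)⁻¹ • ∑ j ∈ Finset.univ.erase i, ψ (x i s) (x j s) • (x j s - x i s))) s) :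
    (∀ i j : Fin N, ∀ s ∈ Set.Icc ta tb, ∀ t ∈ Set.Icc ta tb,
        ‖x i s - x j t‖ ≤ ⨆ p : Fin N × Fin N, ‖x p.1 tb - x p.2 tb‖) ∧
      (⨆ p : Fin N × Fin N, ‖x p.1 ta - x p.2 ta‖) ≤
        ⨆ p : Fin N × Fin N, ‖x p.1 tb - x p.2 tb‖ := by
  have hNpos : 0 < N := by omega
  haveI : Nonempty (Fin N) := ⟨⟨0, hNpos⟩⟩
  have hN1 : (0 : ℝ) < (N : ℝ) - 1 := by
    have : (2 : ℝ) ≤ (N : ℝ) := by exact_mod_cast hN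
    linarith
  have hcont : ∀ i, ContinuousOn (x i) (Icc ta tb) := fun i s hs =>
    (hdyn i s hs).continuousAt.continuousWithinAt
  -- the "support-min" function
  set F : EuclideanSpace ℝ (Fin d) → ℝ → ℝ :=
    fun v t => Finset.univ.inf' Finset.univ_nonempty (fun k => ⟪v, x k t⟫) with hF
  have hFcont : ∀ v, ContinuousOn (F v) (Icc ta tb) := by
    intro v
    exact aux_continuousOn_inf' _ fun i =>
      (innerSL ℝ v).continuous.comp_continuousOn (hcont i)
  have hFle : ∀ v k t, F v t ≤ ⟪v, x k t⟫ := fun v k t =>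
    Finset.inf'_le _ (Finset.mem_univ k)
  -- Key monotonicity: the min of the support function is nonincreasing.
  have hmin : ∀ v : EuclideanSpace ℝ (Fin d), ∀ t1 ∈ Icc ta tb, ∀ t2 ∈ Icc ta tb,
      t1 ≤ t2 → F v t2 ≤ F v t1 := by
    intro v t1 ht1 t2 ht2 h12
    have hsub : Icc t1 t2 ⊆ Icc ta tb := Icc_subset_Icc ht1.1 ht2.2
    have := image_le_of_liminf_slope_right_le_deriv_boundary
      (f := F v) (a := t1) (b := t2) ((hFcont v).mono hsub)
      (B := fun _ => F v t1) (B' := fun _ => 0) le_rfl continuousOn_const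
      (fun w _ => hasDerivWithinAt_const w _ _) ?_ (right_mem_Icc.2 h12)
    · exact this
    · intro w hw r hr
      have hwmem : w ∈ Icc ta tb := hsub ⟨hw.1, hw.2.le⟩
      obtain ⟨i, -, hieq⟩ := Finset.exists_mem_eq_inf' (Finset.univ_nonempty)
        (fun k => ⟪v, x k w⟫)
      -- derivative of t ↦ ⟪v, x i t⟫ at w
      have hder : HasDerivAt (fun t => ⟪v, x i t⟫)
          ((innerSL ℝ v) (-(((N : ℝ) - 1)⁻¹ • ∑ j ∈ Finset.univ.erase i,
            ψ (x i w) (x j w) • (x j w - x i w)))) w :=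
        (innerSL ℝ v).hasFDerivAt.comp_hasDerivAt w (hdyn i w hwmem)
      have hD : (innerSL ℝ v) (-(((N : ℝ) - 1)⁻¹ • ∑ j ∈ Finset.univ.erase i,
          ψ (x i w) (x j w) • (x j w - x i w))) ≤ 0 := by
        simp only [innerSL_apply_apply, inner_neg_right, inner_smul_right, inner_sum,
          inner_sub_right, neg_nonpos]
        apply mul_nonneg (inv_nonneg.2 hN1.le)
        apply Finset.sum_nonneg
        intro j hj
        apply mul_nonneg (hψpos _ _).le
        have h1 : F v w ≤ ⟪v, x j w⟫ := hFle v j w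
        have h2 : F v w = ⟪v, x i w⟫ := hieq
        linarith
      have htend : Tendsto (slope (fun t => ⟪v, x i t⟫) w) (𝓝[>] w) (𝓝 _) :=
        (hasDerivAt_iff_tendsto_slope.mp hder).mono_left
          (nhdsWithin_mono w fun z hz => ne_of_gt hz)
      have hev : ∀ᶠ z in 𝓝[>] w, slope (fun t => ⟪v, x i t⟫) w z < r :=
        htend.eventually_lt_const (lt_of_le_of_lt hD hr)
      refine (hev.and self_mem_nhdsWithin).frequently.mono ?_
      rintro z ⟨hz1, hz2⟩
      refine lt_of_le_of_lt ?_ hz1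
      rw [slope_def_field, slope_def_field]
      have hzw : (0 : ℝ) < z - w := sub_pos.2 hz2
      apply div_le_div_of_nonneg_right _ hzw.le
      have h1 : F v z ≤ ⟪v, x i z⟫ := hFle v i z
      have h2 : F v w = ⟪v, x i w⟫ := hieq
      linarith
  have hbdd : BddAbove (Set.range fun p : Fin N × Fin N => ‖x p.1 tb - x p.2 tb‖) :=
    Set.Finite.bddAbove (Set.finite_range _)
  have main : ∀ i j : Fin N, ∀ s ∈ Set.Icc ta tb, ∀ t ∈ Set.Icc ta tb,
      ‖x i s - x j t‖ ≤ ⨆ p : Fin N × Fin N, ‖x p.1 tb - x p.2 tb‖ := by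
    intro i j s hs t ht
    have hsup0 : (0 : ℝ) ≤ ⨆ p : Fin N × Fin N, ‖x p.1 tb - x p.2 tb‖ := by
      have := le_ciSup hbdd (⟨i, i⟩ : Fin N × Fin N)
      simpa using this
    set v := x i s - x j t with hv
    rcases eq_or_ne v 0 with h0 | h0
    · rw [h0, norm_zero]; exact hsup0
    · have htbmem : tb ∈ Icc ta tb := right_mem_Icc.2 hab
      obtain ⟨k, -, hkeq⟩ := Finset.exists_mem_eq_inf' (Finset.univ_nonempty)
        (fun m => ⟪-v, x m tb⟫)
      obtain ⟨l, -, hleq⟩ := Finset.exists_mem_eq_inf' (Finset.univ_nonempty)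
        (fun m => ⟪v, x m tb⟫)
      have h1 : F (-v) tb ≤ ⟪-v, x i s⟫ :=
        le_trans (hmin (-v) s hs tb htbmem hs.2) (hFle (-v) i s)
      have h2 : F v tb ≤ ⟪v, x j t⟫ :=
        le_trans (hmin v t ht tb htbmem ht.2) (hFle v j t)
      have h1' : ⟪v, x i s⟫ ≤ ⟪v, x k tb⟫ := by
        have e1 : F (-v) tb = ⟪-v, x k tb⟫ := hkeq
        rw [e1] at h1
        simp only [inner_neg_left] at h1
        linarith
      have h2' : ⟪v, x l tb⟫ ≤ ⟪v, x j t⟫ := by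
        have e2 : F v tb = ⟪v, x l tb⟫ := hleq
        rw [e2] at h2; exact h2
      have key : ‖v‖ * ‖v‖ ≤ ‖v‖ * ‖x k tb - x l tb‖ := by
        have e : ⟪v, v⟫ = ⟪v, x i s⟫ - ⟪v, x j t⟫ := by
          rw [hv]; rw [inner_sub_right]
        have cs : ⟪v, x k tb - x l tb⟫ ≤ ‖v‖ * ‖x k tb - x l tb‖ :=
          real_inner_le_norm _ _
        have : ⟪v, v⟫ ≤ ⟪v, x k tb - x l tb⟫ := by
          rw [e, inner_sub_right]; linarith
        calc ‖v‖ * ‖v‖ = ⟪v, v⟫ := (real_inner_self_eq_norm_mul_norm v).symm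
          _ ≤ ⟪v, x k tb - x l tb⟫ := this
          _ ≤ ‖v‖ * ‖x k tb - x l tb‖ := cs
      have hvpos : (0 : ℝ) < ‖v‖ := norm_pos_iff.2 h0
      have hfin : ‖v‖ ≤ ‖x k tb - x l tb‖ := le_of_mul_le_mul_left key hvpos
      exact le_trans hfin (le_ciSup hbdd (⟨k, l⟩ : Fin N × Fin N))
  refine ⟨main, ?_⟩
  have hta : ta ∈ Icc ta tb := left_mem_Icc.2 hab
  exact ciSup_le fun p => main p.1 p.2 ta hta ta hta
end

section
/- Under the Hegselmann–Krause dynamics with positive interaction (α ≡ 1) on [t_a, t_b] with 0 < ψ ≤ K, for all i, j, every unit vector v ∈ ℝ^d, and all t_a ≤ t̄ ≤ t ≤ t_b: ⟨x_i(t) - x_j(t), v⟩ ≤ e^{-K(t - t̄)} ⟨x_i(t̄) - x_j(t̄), v⟩ + (1 - e^{-K(t - t̄)}) d(t_a). -/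
open Finset in
theorem aux_bound {N d : ℕ} {K : ℝ} (hN : 2 ≤ N) (hK : 0 < K)
    {ψ : EuclideanSpace ℝ (Fin d) → EuclideanSpace ℝ (Fin d) → ℝ}
    (hψpos : ∀ y z, 0 < ψ y z) (hψK : ∀ y z, ψ y z ≤ K)
    {x : Fin N → ℝ → EuclideanSpace ℝ (Fin d)}
    (v : EuclideanSpace ℝ (Fin d)) (k : Fin N) (s : ℝ) (C : ℝ)
    (hC : ∀ l, (inner ℝ (x l s) v : ℝ) ≤ C) :
    ((N : ℝ) - 1)⁻¹ * ∑ l ∈ Finset.univ.erase k,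
        ψ (x k s) (x l s) * ((inner ℝ (x l s) v : ℝ) - (inner ℝ (x k s) v : ℝ))
      ≤ K * (C - (inner ℝ (x k s) v : ℝ)) := by
  have hN1 : (0:ℝ) < (N : ℝ) - 1 := by
    have : (2:ℝ) ≤ (N:ℝ) := by exact_mod_cast hN
    linarith
  have hterm : ∀ l ∈ Finset.univ.erase k,
      ψ (x k s) (x l s) * ((inner ℝ (x l s) v : ℝ) - (inner ℝ (x k s) v : ℝ))
        ≤ K * (C - (inner ℝ (x k s) v : ℝ)) := by
    intro l _
    rcases le_or_gt (inner ℝ (x k s) v : ℝ) (inner ℝ (x l s) v : ℝ) with h | h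
    · calc ψ (x k s) (x l s) * ((inner ℝ (x l s) v : ℝ) - (inner ℝ (x k s) v : ℝ))
          ≤ K * ((inner ℝ (x l s) v : ℝ) - (inner ℝ (x k s) v : ℝ)) := by
            apply mul_le_mul_of_nonneg_right (hψK _ _) (by linarith)
        _ ≤ K * (C - (inner ℝ (x k s) v : ℝ)) := by
            apply mul_le_mul_of_nonneg_left (by have := hC l; linarith) hK.le
    · have h1 : ψ (x k s) (x l s) * ((inner ℝ (x l s) v : ℝ) - (inner ℝ (x k s) v : ℝ)) ≤ 0 :=
        mul_nonpos_of_nonneg_of_nonpos (hψpos _ _).le (by linarith)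
      have h2 : (0:ℝ) ≤ K * (C - (inner ℝ (x k s) v : ℝ)) :=
        mul_nonneg hK.le (by have := hC k; linarith)
      linarith
  calc ((N : ℝ) - 1)⁻¹ * ∑ l ∈ Finset.univ.erase k,
        ψ (x k s) (x l s) * ((inner ℝ (x l s) v : ℝ) - (inner ℝ (x k s) v : ℝ))
      ≤ ((N : ℝ) - 1)⁻¹ * (((Finset.univ.erase k).card : ℝ) * (K * (C - (inner ℝ (x k s) v : ℝ)))) := by
        apply mul_le_mul_of_nonneg_left _ (inv_nonneg.2 hN1.le)
        exact Finset.sum_le_card_nsmul _ _ _ hterm |>.trans_eq (by simp [nsmul_eq_mul])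
    _ = K * (C - (inner ℝ (x k s) v : ℝ)) := by
        rw [Finset.card_erase_of_mem (Finset.mem_univ k), Finset.card_univ, Fintype.card_fin]
        have : ((N - 1 : ℕ) : ℝ) = (N : ℝ) - 1 := by
          have : 1 ≤ N := by omega
          push_cast [this]; ring
        rw [this]
        field_simp

open Finset in
theorem aux_deriv {N d : ℕ}
    {ψ : EuclideanSpace ℝ (Fin d) → EuclideanSpace ℝ (Fin d) → ℝ}
    {x : Fin N → ℝ → EuclideanSpace ℝ (Fin d)} {ta tb : ℝ}
    (hdyn : ∀ i, ∀ s ∈ Set.Icc ta tb, HasDerivAt (x i)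
      (((N : ℝ) - 1)⁻¹ • ∑ j ∈ Finset.univ.erase i, ψ (x i s) (x j s) • (x j s - x i s)) s)
    (v : EuclideanSpace ℝ (Fin d)) (k : Fin N) {s : ℝ} (hs : s ∈ Set.Icc ta tb) :
    HasDerivAt (fun s => (inner ℝ (x k s) v : ℝ))
      (((N : ℝ) - 1)⁻¹ * ∑ l ∈ Finset.univ.erase k,
        ψ (x k s) (x l s) * ((inner ℝ (x l s) v : ℝ) - (inner ℝ (x k s) v : ℝ))) s := by
  have h := (hdyn k s hs).inner ℝ (hasDerivAt_const s v)
  simp only [inner_zero_right, zero_add] at h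
  refine h.congr_deriv ?_
  symm
  rw [real_inner_smul_left, sum_inner]
  congr 1
  refine Finset.sum_congr rfl fun l _ => ?_
  rw [real_inner_smul_left, inner_sub_left]
set_option maxHeartbeats 1000000 in
theorem aux_inv {N d : ℕ} {K : ℝ} (hN : 2 ≤ N) (hK : 0 < K) {ta tb : ℝ} (hab : ta ≤ tb)
    {ψ : EuclideanSpace ℝ (Fin d) → EuclideanSpace ℝ (Fin d) → ℝ}
    (hψpos : ∀ y z, 0 < ψ y z) (hψK : ∀ y z, ψ y z ≤ K)
    {x : Fin N → ℝ → EuclideanSpace ℝ (Fin d)}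
    (hdyn : ∀ i, ∀ s ∈ Set.Icc ta tb, HasDerivAt (x i)
      (((N : ℝ) - 1)⁻¹ • ∑ j ∈ Finset.univ.erase i, ψ (x i s) (x j s) • (x j s - x i s)) s)
    (v : EuclideanSpace ℝ (Fin d)) (M : ℝ)
    (hM : ∀ l, (inner ℝ (x l ta) v : ℝ) ≤ M) :
    ∀ s ∈ Set.Icc ta tb, ∀ k, (inner ℝ (x k s) v : ℝ) ≤ M := by
  intro s hs k
  haveI : NeZero N := ⟨by omega⟩
  set f : Fin N → ℝ → ℝ := fun l u => (inner ℝ (x l u) v : ℝ) with hf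
  set F : Fin N → ℝ → ℝ := fun l u => ((N : ℝ) - 1)⁻¹ * ∑ m ∈ Finset.univ.erase l,
    ψ (x l u) (x m u) * (f m u - f l u) with hF
  have hder : ∀ l, ∀ u ∈ Set.Icc ta tb, HasDerivAt (f l) (F l u) u :=
    fun l u hu => aux_deriv hdyn v l hu
  -- it suffices to show f k s ≤ M + ε for all ε > 0
  refine le_of_forall_pos_le_add ?_
  intro ε hε
  set c : ℝ := Real.log N + K * N * (tb - ta) + 1 with hc
  have hlogN : (0:ℝ) ≤ Real.log N := Real.log_nonneg (by exact_mod_cast hN.trans' (by norm_num))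
  have hKN : (0:ℝ) ≤ K * N * (tb - ta) :=
    mul_nonneg (mul_nonneg hK.le (Nat.cast_nonneg N)) (by linarith [hs.1, hs.2])
  have hcpos : 0 < c := by positivity
  set lam : ℝ := c / ε with hlam
  have hlampos : 0 < lam := div_pos hcpos hε
  set S : ℝ → ℝ := fun u => ∑ l, Real.exp (lam * f l u) with hS
  have hSpos : ∀ u, 0 < S u := fun u =>
    Finset.sum_pos (fun l _ => Real.exp_pos _) Finset.univ_nonempty
  set g : ℝ → ℝ := fun u => lam⁻¹ * Real.log (S u) with hg
  set G : ℝ → ℝ := fun u => lam⁻¹ * ((∑ l, Real.exp (lam * f l u) * (lam * F l u)) / S u)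
    with hG
  have hgder : ∀ u ∈ Set.Icc ta tb, HasDerivAt g (G u) u := by
    intro u hu
    have hSder : HasDerivAt S (∑ l, Real.exp (lam * f l u) * (lam * F l u)) u := by
      apply HasDerivAt.fun_sum
      intro l _
      exact ((hder l u hu).const_mul lam).exp
    exact ((hSder.log (hSpos u).ne').const_mul lam⁻¹)
  -- each f l u ≤ g u
  have hflg : ∀ u l, f l u ≤ g u := by
    intro u l
    rw [hg]
    have h0 : Real.exp (lam * f l u) ≤ S u :=
      Finset.single_le_sum (f := fun m => Real.exp (lam * f m u))
        (fun m _ => (Real.exp_pos _).le) (Finset.mem_univ l)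
    have h1 : lam * f l u ≤ Real.log (S u) := (Real.le_log_iff_exp_le (hSpos u)).2 h0
    have h2 : lam⁻¹ * (lam * f l u) ≤ lam⁻¹ * Real.log (S u) :=
      mul_le_mul_of_nonneg_left h1 (inv_nonneg.2 hlampos.le)
    rwa [inv_mul_cancel_left₀ hlampos.ne'] at h2
  -- bound on G
  have hGbd : ∀ u ∈ Set.Icc ta tb, G u ≤ K * N / lam := by
    intro u hu
    have hterm : ∀ l, Real.exp (lam * f l u) * (lam * F l u) ≤ K * S u := by
      intro l
      have h1 : F l u ≤ K * (g u - f l u) := aux_bound hN hK hψpos hψK v l u (g u) (hflg u)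
      have h2 : lam * (g u - f l u) ≤ Real.exp (lam * (g u - f l u)) :=
        (Real.add_one_le_exp _).trans' (by linarith)
      have h3 : Real.exp (lam * f l u) * (lam * (K * (g u - f l u)))
          ≤ K * Real.exp (lam * g u) := by
        have : Real.exp (lam * f l u) * (lam * (g u - f l u)) ≤ Real.exp (lam * g u) := by
          calc Real.exp (lam * f l u) * (lam * (g u - f l u))
              ≤ Real.exp (lam * f l u) * Real.exp (lam * (g u - f l u)) :=
                mul_le_mul_of_nonneg_left h2 (Real.exp_pos _).le
            _ = Real.exp (lam * g u) := by rw [← Real.exp_add]; ring_nf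
        calc Real.exp (lam * f l u) * (lam * (K * (g u - f l u)))
            = K * (Real.exp (lam * f l u) * (lam * (g u - f l u))) := by ring
          _ ≤ K * Real.exp (lam * g u) := mul_le_mul_of_nonneg_left this hK.le
      have h4 : Real.exp (lam * g u) = S u := by
        rw [hg]
        rw [show lam * (lam⁻¹ * Real.log (S u)) = Real.log (S u) by field_simp]
        exact Real.exp_log (hSpos u)
      calc Real.exp (lam * f l u) * (lam * F l u)
          ≤ Real.exp (lam * f l u) * (lam * (K * (g u - f l u))) := by
            apply mul_le_mul_of_nonneg_left _ (Real.exp_pos _).le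
            exact mul_le_mul_of_nonneg_left h1 hlampos.le
        _ ≤ K * Real.exp (lam * g u) := h3
        _ = K * S u := by rw [h4]
    have hsum : (∑ l, Real.exp (lam * f l u) * (lam * F l u)) ≤ N * (K * S u) := by
      calc (∑ l, Real.exp (lam * f l u) * (lam * F l u)) ≤ ∑ _l : Fin N, K * S u :=
        Finset.sum_le_sum (fun l _ => hterm l)
        _ = N * (K * S u) := by simp [mul_comm]
    calc G u = lam⁻¹ * ((∑ l, Real.exp (lam * f l u) * (lam * F l u)) / S u) := rfl
      _ ≤ lam⁻¹ * ((N * (K * S u)) / S u) := by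
          apply mul_le_mul_of_nonneg_left _ (inv_nonneg.2 hlampos.le)
          gcongr
      _ = K * N / lam := by field_simp [(hSpos u).ne']
  -- antitone
  have hanti : AntitoneOn (fun u => g u - (K * N / lam) * u) (Set.Icc ta tb) := by
    apply antitoneOn_of_deriv_nonpos (convex_Icc ta tb)
    · intro u hu
      exact ((hgder u hu).sub ((hasDerivAt_id u).const_mul (K * (N:ℝ) / lam))).continuousAt.continuousWithinAt
    · intro u hu
      rw [interior_Icc] at hu
      exact ((hgder u (Set.mem_Icc_of_Ioo hu)).sub
        ((hasDerivAt_id u).const_mul (K * (N:ℝ) / lam))).differentiableAt.differentiableWithinAt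
    · intro u hu
      rw [interior_Icc] at hu
      have hd : HasDerivAt (fun u => g u - K * (N:ℝ) / lam * u) (G u - K * (N:ℝ) / lam) u := by
        exact (hgder u (Set.mem_Icc_of_Ioo hu)).sub
          (((hasDerivAt_id u).const_mul (K * (N:ℝ) / lam)).congr_deriv (mul_one _))
      rw [hd.deriv]
      have := hGbd u (Set.mem_Icc_of_Ioo hu)
      linarith
  have hgs : g s ≤ g ta + K * N / lam * (s - ta) := by
    have := hanti (Set.left_mem_Icc.2 hab) hs hs.1
    simp only at this
    linarith
  have hgta : g ta ≤ M + lam⁻¹ * Real.log N := by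
    rw [hg]
    have hSb : S ta ≤ N * Real.exp (lam * M) := by
      calc S ta ≤ ∑ _l : Fin N, Real.exp (lam * M) :=
        Finset.sum_le_sum (fun l _ => Real.exp_le_exp.2
          (mul_le_mul_of_nonneg_left (hM l) hlampos.le))
        _ = N * Real.exp (lam * M) := by simp [mul_comm]
    have hlog : Real.log (S ta) ≤ Real.log N + lam * M := by
      calc Real.log (S ta) ≤ Real.log (N * Real.exp (lam * M)) :=
        Real.log_le_log (hSpos ta) hSb
        _ = Real.log N + lam * M := by
          rw [Real.log_mul (by positivity) (Real.exp_pos _).ne', Real.log_exp]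
    calc lam⁻¹ * Real.log (S ta) ≤ lam⁻¹ * (Real.log N + lam * M) :=
        mul_le_mul_of_nonneg_left hlog (inv_nonneg.2 hlampos.le)
      _ = M + lam⁻¹ * Real.log N := by field_simp; ring
  have key : f k s ≤ M + lam⁻¹ * c := by
    have h5 : K * N / lam * (s - ta) ≤ lam⁻¹ * (K * N * (tb - ta)) := by
      rw [div_eq_mul_inv]
      have h6 : K * N * (s - ta) ≤ K * N * (tb - ta) :=
        mul_le_mul_of_nonneg_left (by linarith [hs.2]) (by positivity)
      calc K * N * lam⁻¹ * (s - ta) = lam⁻¹ * (K * N * (s - ta)) := by ring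
        _ ≤ lam⁻¹ * (K * N * (tb - ta)) :=
          mul_le_mul_of_nonneg_left h6 (inv_nonneg.2 hlampos.le)
    have h7 : lam⁻¹ * Real.log N + lam⁻¹ * (K * N * (tb - ta)) ≤ lam⁻¹ * c := by
      rw [hc]
      have : (0:ℝ) ≤ lam⁻¹ := inv_nonneg.2 hlampos.le
      nlinarith
    calc f k s ≤ g s := hflg s k
      _ ≤ g ta + K * N / lam * (s - ta) := hgs
      _ ≤ M + lam⁻¹ * Real.log N + lam⁻¹ * (K * N * (tb - ta)) := by linarith
      _ ≤ M + lam⁻¹ * c := by linarith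
  have : lam⁻¹ * c ≤ ε := by
    have : (c/ε)⁻¹ * c = ε := by field_simp
    rw [hlam, this]
  linarith
set_option maxHeartbeats 1000000 in
theorem aux_decay {N d : ℕ} {K : ℝ} (hN : 2 ≤ N) (hK : 0 < K) {ta tb : ℝ} (hab : ta ≤ tb)
    {ψ : EuclideanSpace ℝ (Fin d) → EuclideanSpace ℝ (Fin d) → ℝ}
    (hψpos : ∀ y z, 0 < ψ y z) (hψK : ∀ y z, ψ y z ≤ K)
    {x : Fin N → ℝ → EuclideanSpace ℝ (Fin d)}
    (hdyn : ∀ i, ∀ s ∈ Set.Icc ta tb, HasDerivAt (x i)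
      (((N : ℝ) - 1)⁻¹ • ∑ j ∈ Finset.univ.erase i, ψ (x i s) (x j s) • (x j s - x i s)) s)
    (v : EuclideanSpace ℝ (Fin d)) (M : ℝ)
    (hM : ∀ l, (inner ℝ (x l ta) v : ℝ) ≤ M) (k : Fin N)
    {tbar t : ℝ} (h1 : ta ≤ tbar) (h2 : tbar ≤ t) (h3 : t ≤ tb) :
    (inner ℝ (x k t) v : ℝ) ≤ Real.exp (-K * (t - tbar)) * (inner ℝ (x k tbar) v : ℝ)
      + (1 - Real.exp (-K * (t - tbar))) * M := by
  have hinv := aux_inv hN hK hab hψpos hψK hdyn v M hM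
  set f : Fin N → ℝ → ℝ := fun l u => (inner ℝ (x l u) v : ℝ) with hf
  set F : Fin N → ℝ → ℝ := fun l u => ((N : ℝ) - 1)⁻¹ * ∑ m ∈ Finset.univ.erase l,
    ψ (x l u) (x m u) * (f m u - f l u) with hF
  have hder : ∀ l, ∀ u ∈ Set.Icc ta tb, HasDerivAt (f l) (F l u) u :=
    fun l u hu => aux_deriv hdyn v l hu
  set h : ℝ → ℝ := fun u => Real.exp (K * u) * (f k u - M) with hh
  have hhd : ∀ u ∈ Set.Icc ta tb, HasDerivAt h
      (Real.exp (K * u) * K * (f k u - M) + Real.exp (K * u) * F k u) u := by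
    intro u hu
    have e1 : HasDerivAt (fun u => Real.exp (K * u)) (Real.exp (K * u) * K) u := by
      simpa using ((hasDerivAt_id u).const_mul K).exp
    have e2 : HasDerivAt (fun u => f k u - M) (F k u) u := (hder k u hu).sub_const M
    exact e1.mul e2
  have hderiv_nonpos : ∀ u ∈ Set.Icc ta tb,
      Real.exp (K * u) * K * (f k u - M) + Real.exp (K * u) * F k u ≤ 0 := by
    intro u hu
    have hb : F k u ≤ K * (M - f k u) :=
      aux_bound hN hK hψpos hψK v k u M (fun l => hinv u hu l)
    have he : (0:ℝ) < Real.exp (K * u) := Real.exp_pos _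
    nlinarith [mul_le_mul_of_nonneg_left hb he.le]
  have hanti : AntitoneOn h (Set.Icc ta tb) := by
    apply antitoneOn_of_deriv_nonpos (convex_Icc ta tb)
    · intro u hu
      exact (hhd u hu).continuousAt.continuousWithinAt
    · intro u hu
      rw [interior_Icc] at hu
      exact (hhd u (Set.mem_Icc_of_Ioo hu)).differentiableAt.differentiableWithinAt
    · intro u hu
      rw [interior_Icc] at hu
      rw [(hhd u (Set.mem_Icc_of_Ioo hu)).deriv]
      exact hderiv_nonpos u (Set.mem_Icc_of_Ioo hu)
  have h0 : h t ≤ h tbar :=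
    hanti (Set.mem_Icc.2 ⟨h1, h2.trans h3⟩) (Set.mem_Icc.2 ⟨h1.trans h2, h3⟩) h2
  have e3 : Real.exp (-(K * t)) * (Real.exp (K * t) * (f k t - M))
      ≤ Real.exp (-(K * t)) * (Real.exp (K * tbar) * (f k tbar - M)) :=
    mul_le_mul_of_nonneg_left h0 (Real.exp_pos _).le
  rw [← mul_assoc, ← mul_assoc, ← Real.exp_add, ← Real.exp_add, neg_add_cancel,
    Real.exp_zero, one_mul] at e3
  have e4 : -(K * t) + K * tbar = -K * (t - tbar) := by ring
  rw [e4, mul_sub] at e3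
  linarith
theorem stmt_8 (N d : ℕ) (hN : 2 ≤ N) (hd : 1 ≤ d)
    (ta tb : ℝ) (hab : ta ≤ tb) (K : ℝ) (hK : 0 < K)
    (ψ : EuclideanSpace ℝ (Fin d) → EuclideanSpace ℝ (Fin d) → ℝ)
    (hψc : Continuous fun p : EuclideanSpace ℝ (Fin d) × EuclideanSpace ℝ (Fin d) => ψ p.1 p.2)
    (hψpos : ∀ y z, 0 < ψ y z) (hψK : ∀ y z, ψ y z ≤ K)
    (x : Fin N → ℝ → EuclideanSpace ℝ (Fin d))
    (hdyn : ∀ i, ∀ s ∈ Set.Icc ta tb, HasDerivAt (x i)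
      (((N : ℝ) - 1)⁻¹ • ∑ j ∈ Finset.univ.erase i, ψ (x i s) (x j s) • (x j s - x i s)) s)
    (i j : Fin N) (v : EuclideanSpace ℝ (Fin d)) (hv : ‖v‖ = 1)
    (tbar t : ℝ) (h1 : ta ≤ tbar) (h2 : tbar ≤ t) (h3 : t ≤ tb) :
    (inner ℝ (x i t - x j t) v : ℝ) ≤
      Real.exp (-K * (t - tbar)) * (inner ℝ (x i tbar - x j tbar) v : ℝ) +
        (1 - Real.exp (-K * (t - tbar))) *
          ⨆ p : Fin N × Fin N, ‖x p.1 ta - x p.2 ta‖ := by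
  haveI : NeZero N := ⟨by omega⟩
  obtain ⟨k0, hk0⟩ := Finite.exists_max (fun l : Fin N => (inner ℝ (x l ta) v : ℝ))
  obtain ⟨k1, hk1⟩ := Finite.exists_max (fun l : Fin N => (inner ℝ (x l ta) (-v) : ℝ))
  set M : ℝ := (inner ℝ (x k0 ta) v : ℝ) with hM
  set M' : ℝ := (inner ℝ (x k1 ta) (-v) : ℝ) with hM'
  have hA := aux_decay hN hK hab hψpos hψK hdyn v M hk0 i h1 h2 h3
  have hB := aux_decay hN hK hab hψpos hψK hdyn (-v) M' hk1 j h1 h2 h3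
  set e : ℝ := Real.exp (-K * (t - tbar)) with he
  have hepos : 0 < e := Real.exp_pos _
  have he1 : e ≤ 1 := Real.exp_le_one_iff.2 (by nlinarith)
  have hsup : M + M' ≤ ⨆ p : Fin N × Fin N, ‖x p.1 ta - x p.2 ta‖ := by
    have h5 : M + M' = (inner ℝ (x k0 ta - x k1 ta) v : ℝ) := by
      rw [hM, hM', inner_sub_left, inner_neg_right]; ring
    have h6 : (inner ℝ (x k0 ta - x k1 ta) v : ℝ) ≤ ‖x k0 ta - x k1 ta‖ := by
      have := real_inner_le_norm (x k0 ta - x k1 ta) v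
      rwa [hv, mul_one] at this
    have h7 : ‖x k0 ta - x k1 ta‖ ≤ ⨆ p : Fin N × Fin N, ‖x p.1 ta - x p.2 ta‖ := by
      exact le_ciSup (f := fun p : Fin N × Fin N => ‖x p.1 ta - x p.2 ta‖)
        (Set.Finite.bddAbove (Set.finite_range _)) (⟨k0, k1⟩ : Fin N × Fin N)
    linarith
  have hlhs : (inner ℝ (x i t - x j t) v : ℝ)
      = (inner ℝ (x i t) v : ℝ) + (inner ℝ (x j t) (-v) : ℝ) := by
    rw [inner_sub_left, inner_neg_right]; ring
  have hrhs : (inner ℝ (x i tbar - x j tbar) v : ℝ)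
      = (inner ℝ (x i tbar) v : ℝ) + (inner ℝ (x j tbar) (-v) : ℝ) := by
    rw [inner_sub_left, inner_neg_right]; ring
  rw [hlhs, hrhs]
  nlinarith [mul_le_mul_of_nonneg_left hsup (by linarith : (0:ℝ) ≤ 1 - e)]
end

section
/- Suppose that additionally ψ(x_i(t), x_j(t)) ≥ ψ₀ > 0 for all i, j and all t ∈ [t_a, t_b]. Then under the Hegselmann–Krause dynamics with positive interaction (α ≡ 1) on [t_a, t_b], d(t_b) ≤ C · d(t_a), where C = max{ 1 - e^{-K(t_b - t_a)}, 1 - (ψ₀/K)(1 - e^{-K(t_b - t_a)}) } ∈ (0,1). -/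
open Set Filter Topology Finset Real
open scoped InnerProductSpace

/-!
Fix agents `i, j` and the unit vector `v` along `x i tb - x j tb`. The projected gaps
`⟪x k - x l, v⟫` obey a maximum principle (at a maximal gap every interaction term pulls the
gap inwards), so they all stay below `D₀ = d(ta)`. While `f = ⟪x i - x j, v⟫` is nonnegative,
`ψ₀ ≤ ψ ≤ K` yields `f' ≤ -K f + (K - ψ₀) D₀`; integrating this from `ta`, or from the last
zero of `f`, gives `f tb ≤ (1 - ψ₀ / K * (1 - exp (-K (tb - ta)))) D₀`, the second entry of
the maximum times `D₀`.
-/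

theorem eventually_slope_sup'_lt {ι : Type*} [Fintype ι] [Nonempty ι] {g : ι → ℝ → ℝ}
    {g' : ι → ℝ} {s r : ℝ} (hg : ∀ k, HasDerivAt (g k) (g' k) s)
    (hmax : ∀ k, (∀ l, g l s ≤ g k s) → g' k ≤ 0) (hr : 0 < r) :
    ∀ᶠ z in 𝓝[>] s, slope (fun t ↦ univ.sup' univ_nonempty (g · t)) s z < r := by
  set F : ℝ → ℝ := fun t ↦ univ.sup' univ_nonempty (g · t)
  have hle : ∀ k, g k s ≤ F s := fun k ↦ le_sup' (g · s) (mem_univ k)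
  have hk : ∀ k, ∀ᶠ z in 𝓝[>] s, (z - s)⁻¹ * (g k z - F s) < r := by
    intro k
    rcases (hle k).eq_or_lt with hFs | hlt
    · have hg'k : g' k < r := (hmax k fun l ↦ hFs ▸ hle l).trans_lt hr
      filter_upwards [(hg k).hasDerivWithinAt.limsup_slope_le' (lt_irrefl s) hg'k] with z hz
      rwa [slope_def_field, div_eq_inv_mul, hFs] at hz
    · have hneg : ∀ᶠ z in 𝓝[>] s, g k z - F s < 0 :=
        (((hg k).continuousAt.tendsto.mono_left nhdsWithin_le_nhds).sub_const
          (F s)).eventually_lt_const (sub_neg.2 hlt)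
      filter_upwards [hneg, self_mem_nhdsWithin] with z hz hsz
      exact (mul_neg_of_pos_of_neg (inv_pos.2 (sub_pos.2 hsz)) hz).trans hr
  filter_upwards [eventually_all.2 hk] with z hz
  obtain ⟨k, -, hFz⟩ := exists_mem_eq_sup' univ_nonempty (g · z)
  rw [slope_def_field, div_eq_inv_mul]
  exact (show F z = g k z from hFz) ▸ hz k

theorem le_of_hasDerivAt_nonpos_of_isMax {ι : Type*} [Finite ι] {g g' : ι → ℝ → ℝ}
    {a b M : ℝ} (hg : ∀ k, ∀ s ∈ Icc a b, HasDerivAt (g k) (g' k s) s)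
    (hmax : ∀ s ∈ Icc a b, ∀ k, (∀ l, g l s ≤ g k s) → g' k s ≤ 0)
    (ha : ∀ k, g k a ≤ M) : ∀ t ∈ Icc a b, ∀ k, g k t ≤ M := by
  cases isEmpty_or_nonempty ι
  · exact fun _ _ k ↦ isEmptyElim k
  have := Fintype.ofFinite ι
  set F : ℝ → ℝ := fun t ↦ univ.sup' univ_nonempty (g · t)
  have hF : ∀ t ∈ Icc a b, F t ≤ M := by
    refine image_le_of_liminf_slope_right_le_deriv_boundary (B := fun _ ↦ M) (B' := 0)
      (fun s hs ↦ (ContinuousAt.finset_sup'_apply univ_nonempty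
        fun k _ ↦ (hg k s hs).continuousAt).continuousWithinAt)
      (sup'_le _ _ fun k _ ↦ ha k) continuousOn_const
      (fun s _ ↦ hasDerivWithinAt_const s _ M) fun s hs r hr ↦ ?_
    exact (eventually_slope_sup'_lt (fun k ↦ hg k s (Ico_subset_Icc_self hs))
      (hmax s (Ico_subset_Icc_self hs)) hr).frequently
  exact fun t ht k ↦ (le_sup' (g · t) (mem_univ k)).trans (hF t ht)

theorem le_exp_mul_add_of_deriv_le {f f' : ℝ → ℝ} {a b K c : ℝ} (hab : a ≤ b) (hK : K ≠ 0)
    (hf : ∀ s ∈ Icc a b, HasDerivAt f (f' s) s) (bound : ∀ s ∈ Ico a b, f' s ≤ -K * f s + c) :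
    f b ≤ exp (-K * (b - a)) * f a + c / K * (1 - exp (-K * (b - a))) := by
  have hgron := le_gronwallBound_of_liminf_deriv_right_le
    (fun s hs ↦ (hf s hs).continuousAt.continuousWithinAt)
    (fun s hs r hr ↦ by
      simpa only [slope_def_field, div_eq_inv_mul] using
        (hf s (Ico_subset_Icc_self hs)).hasDerivWithinAt.liminf_right_slope_le hr)
    le_rfl bound b ⟨hab, le_rfl⟩
  rw [gronwallBound_of_K_ne_0 (neg_ne_zero.2 hK)] at hgron
  convert hgron using 1
  field_simp
  ring

theorem ContinuousOn.exists_eq_zero_forall_nonneg {f : ℝ → ℝ} {a b : ℝ}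
    (hf : ContinuousOn f (Icc a b)) (hb : 0 ≤ f b) (hle : ∃ s ∈ Icc a b, f s ≤ 0) :
    ∃ s₀ ∈ Icc a b, f s₀ = 0 ∧ ∀ s ∈ Icc s₀ b, 0 ≤ f s := by
  set S := Icc a b ∩ f ⁻¹' Iic 0
  have hSbdd : BddAbove S := ⟨b, fun _ hs ↦ hs.1.2⟩
  have hs₀ : sSup S ∈ S :=
    (hf.preimage_isClosed_of_isClosed isClosed_Icc isClosed_Iic).csSup_mem hle hSbdd
  have hIoc : Ioc (sSup S) b ⊆ Icc a b ∩ f ⁻¹' Ici 0 := fun s hs ↦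
    ⟨⟨hs₀.1.1.trans hs.1.le, hs.2⟩, (le_of_not_ge fun hfs ↦
      hs.1.not_ge (le_csSup hSbdd ⟨⟨hs₀.1.1.trans hs.1.le, hs.2⟩, hfs⟩) : 0 ≤ f s)⟩
  have hIcc : Icc (sSup S) b ⊆ f ⁻¹' Ici 0 := by
    rcases hs₀.1.2.eq_or_lt with heq | hlt
    · simpa [heq] using hb
    · rw [← closure_Ioc hlt.ne]
      exact (closure_minimal hIoc (hf.preimage_isClosed_of_isClosed isClosed_Icc
        isClosed_Ici)).trans inter_subset_right
  exact ⟨sSup S, hs₀.1, le_antisymm hs₀.2 (hIcc ⟨le_rfl, hs₀.1.2⟩), fun s hs ↦ hIcc hs⟩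

theorem le_exp_mul_max_add_of_deriv_le_of_nonneg {f f' : ℝ → ℝ} {a b K c : ℝ} (hab : a ≤ b)
    (hK : 0 < K) (hc : 0 ≤ c) (hf : ∀ s ∈ Icc a b, HasDerivAt f (f' s) s)
    (bound : ∀ s ∈ Icc a b, 0 ≤ f s → f' s ≤ -K * f s + c) :
    f b ≤ exp (-K * (b - a)) * max (f a) 0 + c / K * (1 - exp (-K * (b - a))) := by
  have hcK : 0 ≤ c / K := div_nonneg hc hK.le
  have hexp_le_one : ∀ {t}, 0 ≤ t → exp (-K * t) ≤ 1 := fun ht ↦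
    exp_le_one_iff.2 (by nlinarith)
  have hrhs : 0 ≤ exp (-K * (b - a)) * max (f a) 0 + c / K * (1 - exp (-K * (b - a))) :=
    add_nonneg (mul_nonneg (exp_pos _).le (le_max_right _ _))
      (mul_nonneg hcK (sub_nonneg.2 (hexp_le_one (sub_nonneg.2 hab))))
  by_cases hpos : ∀ s ∈ Icc a b, 0 ≤ f s
  · rw [max_eq_left (hpos a ⟨le_rfl, hab⟩)]
    exact le_exp_mul_add_of_deriv_le hab hK.ne' hf fun s hs ↦
      bound s (Ico_subset_Icc_self hs) (hpos s (Ico_subset_Icc_self hs))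
  push Not at hpos
  -- `f` dips to `0` or below: restart the comparison from its last zero.
  rcases lt_or_ge (f b) 0 with hb | hb
  · exact hb.le.trans hrhs
  have hcont : ContinuousOn f (Icc a b) := fun s hs ↦ (hf s hs).continuousAt.continuousWithinAt
  obtain ⟨s₀, hs₀, hfs₀, hnonneg⟩ :=
    hcont.exists_eq_zero_forall_nonneg hb (hpos.imp fun _ h ↦ ⟨h.1, h.2.le⟩)
  have hsub : Icc s₀ b ⊆ Icc a b := Icc_subset_Icc_left hs₀.1
  have hlast := le_exp_mul_add_of_deriv_le hs₀.2 hK.ne' (fun s hs ↦ hf s (hsub hs))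
    fun s hs ↦ bound s (hsub (Ico_subset_Icc_self hs)) (hnonneg s (Ico_subset_Icc_self hs))
  have hexp : exp (-K * (b - a)) ≤ exp (-K * (b - s₀)) := exp_le_exp.2 (by nlinarith [hs₀.1])
  rw [hfs₀, mul_zero, zero_add] at hlast
  calc f b ≤ c / K * (1 - exp (-K * (b - s₀))) := hlast
    _ ≤ c / K * (1 - exp (-K * (b - a))) := by gcongr
    _ ≤ _ := le_add_of_nonneg_left (mul_nonneg (exp_pos _).le (le_max_right _ _))

/-- The `m`-th interaction term of the gap derivative, with `p = ψ(xᵢ, xₘ)`, `q = ψ(xⱼ, xₘ)`,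
`a = ⟪xₘ - xᵢ, v⟫` and `b = ⟪xₘ - xⱼ, v⟫`. -/
theorem mul_sub_mul_le_neg_mul_add {p q a b K ψ₀ D : ℝ} (hp : p ∈ Icc ψ₀ K) (hq : q ∈ Icc ψ₀ K)
    (hab : a ≤ b) (hba : b - a ≤ D) (hb : b ≤ D) (ha : -a ≤ D) :
    p * a - q * b ≤ -K * (b - a) + (K - ψ₀) * D := by
  obtain ⟨hp₀, hpK⟩ := hp
  obtain ⟨hq₀, hqK⟩ := hq
  have hKψ : 0 ≤ K - ψ₀ := by linarith
  rcases le_or_gt 0 a with ha₀ | ha₀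
  · nlinarith [mul_nonneg (sub_nonneg.2 hpK) ha₀, mul_le_mul_of_nonneg_left hb hKψ,
      mul_le_mul_of_nonneg_right (sub_le_sub_left hq₀ K) (ha₀.trans hab)]
  rcases le_or_gt 0 b with hb₀ | hb₀
  · nlinarith [mul_le_mul_of_nonneg_left hba hKψ,
      mul_le_mul_of_nonneg_right (sub_le_sub_left hq₀ K) hb₀,
      mul_le_mul_of_nonneg_right (sub_le_sub_left hp₀ K) (neg_nonneg.2 ha₀.le)]
  · nlinarith [mul_nonneg (sub_nonneg.2 hqK) (neg_nonneg.2 hb₀.le),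
      mul_le_mul_of_nonneg_left ha hKψ,
      mul_le_mul_of_nonneg_right (sub_le_sub_left hp₀ K) (neg_nonneg.2 ha₀.le)]

theorem norm_le_of_forall_inner_le {E : Type*} [NormedAddCommGroup E] [InnerProductSpace ℝ E]
    {w : E} {r : ℝ} (h : ∀ v : E, ‖v‖ ≤ 1 → ⟪w, v⟫_ℝ ≤ r) : ‖w‖ ≤ r := by
  have hv : ‖‖w‖⁻¹ • w‖ ≤ 1 := by
    rw [norm_smul, norm_inv, norm_norm]
    exact inv_mul_le_one
  calc ‖w‖ = ⟪w, ‖w‖⁻¹ • w⟫_ℝ := by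
        rw [real_inner_smul_right, real_inner_self_eq_norm_sq, sq, ← mul_assoc, inv_mul_mul_self]
    _ ≤ r := h _ hv

section HegselmannKrause

variable {ι E : Type*} [Fintype ι] [DecidableEq ι] [NormedAddCommGroup E] [InnerProductSpace ℝ E]

noncomputable def hkVelocity (w : ι → ι → ℝ) (y : ι → E) (i : ι) : E :=
  ((Fintype.card ι : ℝ) - 1)⁻¹ • ∑ m ∈ univ.erase i, w i m • (y m - y i)

theorem inner_hkVelocity (w : ι → ι → ℝ) (y : ι → E) (i : ι) (v : E) :
    ⟪hkVelocity w y i, v⟫_ℝ =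
      ((Fintype.card ι : ℝ) - 1)⁻¹ * ∑ m ∈ univ.erase i, w i m * ⟪y m - y i, v⟫_ℝ := by
  simp only [hkVelocity, real_inner_smul_left, sum_inner]

theorem inner_hkVelocity_sub_nonpos {w : ι → ι → ℝ} {y : ι → E} {v : E} {i j : ι}
    (hw : ∀ k m, 0 ≤ w k m) (hmax : ∀ k l, ⟪y k - y l, v⟫_ℝ ≤ ⟪y i - y j, v⟫_ℝ) :
    ⟪hkVelocity w y i - hkVelocity w y j, v⟫_ℝ ≤ 0 := by
  have hcard : (0 : ℝ) ≤ (Fintype.card ι : ℝ) - 1 :=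
    sub_nonneg.2 (Nat.one_le_cast.2 (Fintype.card_pos_iff.2 ⟨i⟩))
  have hi : ∑ m ∈ univ.erase i, w i m * ⟪y m - y i, v⟫_ℝ ≤ 0 := by
    refine sum_nonpos fun m _ ↦ mul_nonpos_of_nonneg_of_nonpos (hw i m) ?_
    have := hmax m j
    rw [← sub_sub_sub_cancel_right (y m) (y i) (y j), inner_sub_left]
    linarith
  have hj : 0 ≤ ∑ m ∈ univ.erase j, w j m * ⟪y m - y j, v⟫_ℝ := by
    refine sum_nonneg fun m _ ↦ mul_nonneg (hw j m) ?_
    have := hmax i m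
    rw [← sub_sub_sub_cancel_left (y j) (y m) (y i), inner_sub_left]
    linarith
  rw [inner_sub_left, inner_hkVelocity, inner_hkVelocity, ← mul_sub]
  exact mul_nonpos_of_nonneg_of_nonpos (inv_nonneg.2 hcard) (by linarith)

theorem inner_hkVelocity_sub_le {w : ι → ι → ℝ} {y : ι → E} {v : E} {i j : ι} {K ψ₀ D : ℝ}
    (hι : 1 < Fintype.card ι) (hψ₀ : 0 ≤ ψ₀) (hw : ∀ k m, w k m ∈ Icc ψ₀ K)
    (hD : ∀ k l, ⟪y k - y l, v⟫_ℝ ≤ D) (hij : 0 ≤ ⟪y i - y j, v⟫_ℝ) :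
    ⟪hkVelocity w y i - hkVelocity w y j, v⟫_ℝ ≤
      -K * ⟪y i - y j, v⟫_ℝ + (K - ψ₀) * D := by
  set f := ⟪y i - y j, v⟫_ℝ
  have hcard : (0 : ℝ) < (Fintype.card ι : ℝ) - 1 := sub_pos.2 (Nat.one_lt_cast.2 hι)
  have hgap : ∀ m, ⟪y m - y j, v⟫_ℝ = ⟪y m - y i, v⟫_ℝ + f := fun m ↦ by
    rw [← inner_add_left, sub_add_sub_cancel]
  have hj : ∑ m ∈ univ.erase j, w j m * ⟪y m - y j, v⟫_ℝ =
      w j i * f + ∑ m ∈ univ.erase i, w j m * ⟪y m - y j, v⟫_ℝ := by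
    rw [sum_erase _ (by simp), ← add_sum_erase _ _ (mem_univ i)]
  have hterm : ∀ m ∈ univ.erase i, w i m * ⟪y m - y i, v⟫_ℝ - w j m * ⟪y m - y j, v⟫_ℝ ≤
      -K * f + (K - ψ₀) * D := fun m _ ↦ by
    have h := mul_sub_mul_le_neg_mul_add (hw i m) (hw j m) (le_add_of_nonneg_right hij)
      ((add_sub_cancel_left _ f).trans_le (hD i j)) (hgap m ▸ hD m j)
      (by rw [← inner_neg_left, neg_sub]; exact hD i m)
    rw [hgap m]
    rwa [add_sub_cancel_left] at h
  have hsum := sum_le_card_nsmul _ _ _ hterm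
  rw [card_erase_of_mem (mem_univ i), card_univ, nsmul_eq_mul, Nat.cast_pred (by omega)] at hsum
  rw [sum_sub_distrib] at hsum
  rw [inner_sub_left, inner_hkVelocity, inner_hkVelocity, ← mul_sub, hj, inv_mul_le_iff₀ hcard]
  linarith [mul_nonneg (hψ₀.trans (hw j i).1) hij]

theorem inner_sub_le_of_hasDerivAt_hkVelocity {x : ι → ℝ → E} {w : ι → ι → ℝ → ℝ}
    {ta tb K ψ₀ D : ℝ} (hι : 1 < Fintype.card ι) (hab : ta ≤ tb) (hψ₀ : 0 < ψ₀)
    (hw : ∀ i m, ∀ s ∈ Icc ta tb, w i m s ∈ Icc ψ₀ K)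
    (hx : ∀ i, ∀ s ∈ Icc ta tb, HasDerivAt (x i) (hkVelocity (w · · s) (x · s) i) s)
    (hD : ∀ i j, ‖x i ta - x j ta‖ ≤ D) {v : E} (hv : ‖v‖ ≤ 1) (i j : ι) :
    ⟪x i tb - x j tb, v⟫_ℝ ≤ (1 - ψ₀ / K * (1 - exp (-K * (tb - ta)))) * D := by
  have hψ₀K : ψ₀ ≤ K := (hw i i ta ⟨le_rfl, hab⟩).1.trans (hw i i ta ⟨le_rfl, hab⟩).2
  have hK : 0 < K := hψ₀.trans_le hψ₀K
  have hD₀ : 0 ≤ D := by simpa using hD i i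
  set g : ι × ι → ℝ → ℝ := fun p t ↦ ⟪x p.1 t - x p.2 t, v⟫_ℝ
  have hg : ∀ p, ∀ s ∈ Icc ta tb, HasDerivAt (g p)
      ⟪hkVelocity (w · · s) (x · s) p.1 - hkVelocity (w · · s) (x · s) p.2, v⟫_ℝ s :=
    fun p s hs ↦ by
      simpa using ((hx p.1 s hs).sub (hx p.2 s hs)).inner ℝ (hasDerivAt_const s v)
  have hg_ta : ∀ p, g p ta ≤ D := fun p ↦
    (real_inner_le_norm _ _).trans ((mul_le_of_le_one_right (norm_nonneg _) hv).trans (hD _ _))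
  have hgD : ∀ t ∈ Icc ta tb, ∀ p, g p t ≤ D :=
    le_of_hasDerivAt_nonpos_of_isMax hg (fun s hs p hp ↦ inner_hkVelocity_sub_nonpos
      (fun k m ↦ hψ₀.le.trans (hw k m s hs).1) fun k l ↦ hp (k, l)) hg_ta
  have hgij := le_exp_mul_max_add_of_deriv_le_of_nonneg hab hK
    (mul_nonneg (sub_nonneg.2 hψ₀K) hD₀) (hg (i, j)) fun s hs hpos ↦
      inner_hkVelocity_sub_le hι hψ₀.le (fun k m ↦ hw k m s hs) (fun k l ↦ hgD s hs (k, l)) hpos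
  set e := exp (-K * (tb - ta))
  have he : e ≤ 1 := exp_le_one_iff.2 (by nlinarith)
  calc g (i, j) tb ≤ e * max (g (i, j) ta) 0 + (K - ψ₀) * D / K * (1 - e) := hgij
    _ ≤ e * D + (K - ψ₀) * D / K * (1 - e) := by
        gcongr
        exact max_le (hg_ta _) hD₀
    _ = (1 - ψ₀ / K * (1 - e)) * D := by
        field_simp
        ring

end HegselmannKrause

theorem max_one_sub_exp_mem_Ioo {K ψ₀ T : ℝ} (hψ₀ : 0 < ψ₀) (hψ₀K : ψ₀ ≤ K) (hT : 0 < T) :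
    max (1 - exp (-K * T)) (1 - ψ₀ / K * (1 - exp (-K * T))) ∈ Set.Ioo (0 : ℝ) 1 := by
  have hK : 0 < K := hψ₀.trans_le hψ₀K
  have he : exp (-K * T) < 1 := exp_lt_one_iff.2 (by nlinarith)
  have hρ : 0 < ψ₀ / K := div_pos hψ₀ hK
  exact ⟨lt_max_of_lt_left (by linarith), max_lt (by linarith [exp_pos (-K * T)])
    (by nlinarith)⟩

theorem stmt_9_general (N d : ℕ) (hN : 2 ≤ N)
    (ta tb : ℝ) (hab : ta < tb) (K ψ₀ : ℝ) (hψ₀ : 0 < ψ₀) (hψ₀K : ψ₀ ≤ K)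
    (ψ : EuclideanSpace ℝ (Fin d) → EuclideanSpace ℝ (Fin d) → ℝ)
    (hψK : ∀ y z, ψ y z ≤ K)
    (x : Fin N → ℝ → EuclideanSpace ℝ (Fin d))
    (hψlow : ∀ i j : Fin N, ∀ s ∈ Set.Icc ta tb, ψ₀ ≤ ψ (x i s) (x j s))
    (hdyn : ∀ i, ∀ s ∈ Set.Icc ta tb, HasDerivAt (x i)
      (((N : ℝ) - 1)⁻¹ • ∑ j ∈ Finset.univ.erase i, ψ (x i s) (x j s) • (x j s - x i s)) s) :
    max (1 - Real.exp (-K * (tb - ta)))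
        (1 - ψ₀ / K * (1 - Real.exp (-K * (tb - ta)))) ∈ Set.Ioo (0:ℝ) 1 ∧
      (⨆ p : Fin N × Fin N, ‖x p.1 tb - x p.2 tb‖) ≤
        max (1 - Real.exp (-K * (tb - ta)))
          (1 - ψ₀ / K * (1 - Real.exp (-K * (tb - ta)))) *
          ⨆ p : Fin N × Fin N, ‖x p.1 ta - x p.2 ta‖ := by
  refine ⟨max_one_sub_exp_mem_Ioo hψ₀ hψ₀K (sub_pos.2 hab), ?_⟩
  have hbdd : BddAbove (range fun p : Fin N × Fin N ↦ ‖x p.1 ta - x p.2 ta‖) :=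
    (finite_range _).bddAbove
  have hD₀ : 0 ≤ ⨆ p : Fin N × Fin N, ‖x p.1 ta - x p.2 ta‖ :=
    Real.iSup_nonneg fun _ ↦ norm_nonneg _
  have : Nonempty (Fin N) := ⟨⟨0, by omega⟩⟩
  refine ciSup_le fun p ↦ norm_le_of_forall_inner_le fun v hv ↦ ?_
  calc _ ≤ _ := inner_sub_le_of_hasDerivAt_hkVelocity (w := fun i m s ↦ ψ (x i s) (x m s))
        (by rw [Fintype.card_fin]; omega) hab.le hψ₀ (fun i m s hs ↦ ⟨hψlow i m s hs, hψK _ _⟩)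
        (fun i s hs ↦ by simpa only [hkVelocity, Fintype.card_fin] using hdyn i s hs)
        (fun i j ↦ le_ciSup hbdd (i, j)) hv p.1 p.2
    _ ≤ _ := mul_le_mul_of_nonneg_right (le_max_right _ _) hD₀

theorem stmt_9 (N d : ℕ) (hN : 2 ≤ N) (hd : 1 ≤ d)
    (ta tb : ℝ) (hab : ta < tb) (K ψ₀ : ℝ) (hψ₀ : 0 < ψ₀) (hψ₀K : ψ₀ ≤ K)
    (ψ : EuclideanSpace ℝ (Fin d) → EuclideanSpace ℝ (Fin d) → ℝ)
    (hψc : Continuous fun p : EuclideanSpace ℝ (Fin d) × EuclideanSpace ℝ (Fin d) => ψ p.1 p.2)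
    (hψpos : ∀ y z, 0 < ψ y z) (hψK : ∀ y z, ψ y z ≤ K)
    (x : Fin N → ℝ → EuclideanSpace ℝ (Fin d))
    (hψlow : ∀ i j : Fin N, ∀ s ∈ Set.Icc ta tb, ψ₀ ≤ ψ (x i s) (x j s))
    (hdyn : ∀ i, ∀ s ∈ Set.Icc ta tb, HasDerivAt (x i)
      (((N : ℝ) - 1)⁻¹ • ∑ j ∈ Finset.univ.erase i, ψ (x i s) (x j s) • (x j s - x i s)) s) :
    max (1 - Real.exp (-K * (tb - ta)))
        (1 - ψ₀ / K * (1 - Real.exp (-K * (tb - ta)))) ∈ Set.Ioo (0:ℝ) 1 ∧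
      (⨆ p : Fin N × Fin N, ‖x p.1 tb - x p.2 tb‖) ≤
        max (1 - Real.exp (-K * (tb - ta)))
          (1 - ψ₀ / K * (1 - Real.exp (-K * (tb - ta)))) *
          ⨆ p : Fin N × Fin N, ‖x p.1 ta - x p.2 ta‖ :=
  stmt_9_general N d hN ta tb hab K ψ₀ hψ₀ hψ₀K ψ hψK x hψlow hdyn
end

section
/- Under the Hegselmann–Krause dynamics with negative interaction (α ≡ -1) on [t_a, t_b] with 0 < ψ ≤ K and K(t_b - t_a) < ln 2, one has d(t_b) ≤ [e^{K(t_b - t_a)} / (2 - e^{K(t_b - t_a)})] · d(t_a). -/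
open Set Finset

set_option maxHeartbeats 1000000 in
theorem stmt_10 (N d : ℕ) (hN : 2 ≤ N) (hd : 1 ≤ d)
    (ta tb : ℝ) (hab : ta ≤ tb) (K : ℝ) (hK : 0 < K)
    (hlen : K * (tb - ta) < Real.log 2)
    (ψ : EuclideanSpace ℝ (Fin d) → EuclideanSpace ℝ (Fin d) → ℝ)
    (hψc : Continuous fun p : EuclideanSpace ℝ (Fin d) × EuclideanSpace ℝ (Fin d) => ψ p.1 p.2)
    (hψpos : ∀ y z, 0 < ψ y z) (hψK : ∀ y z, ψ y z ≤ K)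
    (x : Fin N → ℝ → EuclideanSpace ℝ (Fin d))
    (hdyn : ∀ i, ∀ s ∈ Set.Icc ta tb, HasDerivAt (x i)
      (-(((N : ℝ) - 1)⁻¹ • ∑ j ∈ Finset.univ.erase i, ψ (x i s) (x j s) • (x j s - x i s))) s) :
    (⨆ p : Fin N × Fin N, ‖x p.1 tb - x p.2 tb‖) ≤
      Real.exp (K * (tb - ta)) / (2 - Real.exp (K * (tb - ta))) *
        ⨆ p : Fin N × Fin N, ‖x p.1 ta - x p.2 ta‖ := by
  haveI : NeZero N := ⟨by omega⟩
  have hNr : (1 : ℝ) ≤ (N : ℝ) - 1 := by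
    have : (2 : ℝ) ≤ (N : ℝ) := by exact_mod_cast hN
    linarith
  have hNne : ((N : ℝ) - 1) ≠ 0 := by linarith
  set E : ℝ := Real.exp (K * (tb - ta)) with hEdef
  have hE1 : 1 ≤ E := Real.one_le_exp (by nlinarith)
  have hE2 : E < 2 := by
    have := Real.exp_lt_exp.mpr hlen
    rwa [Real.exp_log (by norm_num : (0:ℝ) < 2)] at this
  -- maxima per pair over the time interval
  have hcont : ∀ i j : Fin N, ContinuousOn (fun s => x i s - x j s) (Icc ta tb) := by
    intro i j s hs
    exact (((hdyn i s hs).sub (hdyn j s hs)).continuousAt).continuousWithinAt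
  have hne : (Icc ta tb).Nonempty := ⟨ta, le_refl ta, hab⟩
  have hmax : ∀ p : Fin N × Fin N, ∃ sp ∈ Icc ta tb, ∀ s ∈ Icc ta tb,
      ‖x p.1 s - x p.2 s‖ ≤ ‖x p.1 sp - x p.2 sp‖ := by
    intro p
    obtain ⟨sq, hsq, hsq2⟩ := isCompact_Icc.exists_isMaxOn hne
      ((continuous_norm.comp_continuousOn (hcont p.1 p.2)))
    exact ⟨sq, hsq, fun s hs => hsq2 hs⟩
  choose sp hsp hsple using hmax
  have huniv : (Finset.univ : Finset (Fin N × Fin N)).Nonempty := Finset.univ_nonempty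
  set M : ℝ := Finset.univ.sup' huniv (fun p : Fin N × Fin N => ‖x p.1 (sp p) - x p.2 (sp p)‖)
    with hMdef
  have hM : ∀ (i j : Fin N), ∀ s ∈ Icc ta tb, ‖x i s - x j s‖ ≤ M := by
    intro i j s hs
    exact le_trans (hsple (i, j) s hs)
      (Finset.le_sup' (f := fun p : Fin N × Fin N => ‖x p.1 (sp p) - x p.2 (sp p)‖)
        (Finset.mem_univ (i, j)))
  have hM0 : 0 ≤ M := le_trans (norm_nonneg _) (hM 0 0 ta ⟨le_refl ta, hab⟩)
  set δ : ℝ := ⨆ p : Fin N × Fin N, ‖x p.1 ta - x p.2 ta‖ with hδdef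
  have hδle : ∀ i j : Fin N, ‖x i ta - x j ta‖ ≤ δ :=
    fun i j => le_ciSup (f := fun p : Fin N × Fin N => ‖x p.1 ta - x p.2 ta‖)
      (Set.finite_range _).bddAbove (i, j)
  have hδ0 : 0 ≤ δ := le_trans (norm_nonneg _) (hδle 0 0)
  -- key estimate via Grönwall
  have key : ∀ i j : Fin N, ∀ t ∈ Icc ta tb,
      ‖x i t - x j t‖ ≤ δ * Real.exp (K * (t - ta)) + M * (Real.exp (K * (t - ta)) - 1) := by
    intro i j t ht
    have hexp1 : 1 ≤ Real.exp (K * (t - ta)) := Real.one_le_exp (by nlinarith [ht.1])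
    rcases eq_or_ne i j with rfl | hij
    · simp only [sub_self, norm_zero]
      nlinarith
    · have hjmem : j ∈ Finset.univ.erase i := Finset.mem_erase.mpr ⟨hij.symm, Finset.mem_univ _⟩
      have himem : i ∈ Finset.univ.erase j := Finset.mem_erase.mpr ⟨hij, Finset.mem_univ _⟩
      have bound : ∀ s ∈ Ico ta tb,
          ‖(-(((N : ℝ) - 1)⁻¹ • ∑ k ∈ Finset.univ.erase i, ψ (x i s) (x k s) • (x k s - x i s))) -
           (-(((N : ℝ) - 1)⁻¹ • ∑ k ∈ Finset.univ.erase j, ψ (x j s) (x k s) • (x k s - x j s)))‖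
          ≤ K * ‖x i s - x j s‖ + K * M := by
        intro s hs
        have hsIcc : s ∈ Icc ta tb := Ico_subset_Icc_self hs
        have hvM : ‖x i s - x j s‖ ≤ M := hM i j s hsIcc
        have hv0 : (0:ℝ) ≤ ‖x i s - x j s‖ := norm_nonneg _
        -- rewrite the difference of derivatives
        have hisum : ∑ k ∈ Finset.univ.erase i, ψ (x i s) (x k s) • (x k s - x i s)
            = ψ (x i s) (x j s) • (x j s - x i s) +
              ∑ k ∈ (Finset.univ.erase i).erase j, ψ (x i s) (x k s) • (x k s - x i s) :=
          (Finset.add_sum_erase _ (fun k => ψ (x i s) (x k s) • (x k s - x i s)) hjmem).symm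
        have hjsum : ∑ k ∈ Finset.univ.erase j, ψ (x j s) (x k s) • (x k s - x j s)
            = ψ (x j s) (x i s) • (x i s - x j s) +
              ∑ k ∈ (Finset.univ.erase i).erase j, ψ (x j s) (x k s) • (x k s - x j s) := by
          rw [Finset.erase_right_comm]
          exact (Finset.add_sum_erase _ (fun k => ψ (x j s) (x k s) • (x k s - x j s)) himem).symm
        have hrw : (-(((N : ℝ) - 1)⁻¹ • ∑ k ∈ Finset.univ.erase i,
                ψ (x i s) (x k s) • (x k s - x i s))) -
             (-(((N : ℝ) - 1)⁻¹ • ∑ k ∈ Finset.univ.erase j,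
                ψ (x j s) (x k s) • (x k s - x j s)))
           = ((N : ℝ) - 1)⁻¹ • (((ψ (x j s) (x i s) + ψ (x i s) (x j s)) • (x i s - x j s)) +
             ∑ k ∈ (Finset.univ.erase i).erase j,
               (ψ (x j s) (x k s) • (x k s - x j s) - ψ (x i s) (x k s) • (x k s - x i s))) := by
          rw [hisum, hjsum, Finset.sum_sub_distrib]
          module
        rw [hrw, norm_smul]
        have hcpos : (0:ℝ) < ((N : ℝ) - 1)⁻¹ := by positivity
        rw [Real.norm_eq_abs, abs_of_pos hcpos]
        have hcard : ((Finset.univ.erase i).erase j).card = N - 2 := by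
          rw [Finset.card_erase_of_mem hjmem, Finset.card_erase_of_mem (Finset.mem_univ i)]
          rw [Finset.card_univ, Fintype.card_fin]
          omega
        have hterm : ∀ k ∈ (Finset.univ.erase i).erase j,
            ‖ψ (x j s) (x k s) • (x k s - x j s) - ψ (x i s) (x k s) • (x k s - x i s)‖
            ≤ K * M + K * ‖x i s - x j s‖ := by
          intro k _
          have hkey : ψ (x j s) (x k s) • (x k s - x j s) - ψ (x i s) (x k s) • (x k s - x i s)
              = (ψ (x j s) (x k s) - ψ (x i s) (x k s)) • (x k s - x i s) +
                ψ (x j s) (x k s) • (x i s - x j s) := by module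
          rw [hkey]
          refine le_trans (norm_add_le _ _) ?_
          rw [norm_smul, norm_smul, Real.norm_eq_abs, Real.norm_eq_abs]
          have h1 : |ψ (x j s) (x k s) - ψ (x i s) (x k s)| ≤ K := by
            rw [abs_le]
            constructor <;> nlinarith [hψpos (x j s) (x k s), hψpos (x i s) (x k s),
              hψK (x j s) (x k s), hψK (x i s) (x k s)]
          have h2 : ‖x k s - x i s‖ ≤ M := hM k i s hsIcc
          have h3 : |ψ (x j s) (x k s)| ≤ K := by
            rw [abs_of_pos (hψpos _ _)]; exact hψK _ _
          exact add_le_add (mul_le_mul h1 h2 (norm_nonneg _) hK.le)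
            (mul_le_mul_of_nonneg_right h3 hv0)
        have hsum : ‖∑ k ∈ (Finset.univ.erase i).erase j,
            (ψ (x j s) (x k s) • (x k s - x j s) - ψ (x i s) (x k s) • (x k s - x i s))‖
            ≤ ((N:ℝ) - 2) * (K * M + K * ‖x i s - x j s‖) := by
          refine le_trans (norm_sum_le _ _) (le_trans (Finset.sum_le_sum hterm) ?_)
          rw [Finset.sum_const, hcard, nsmul_eq_mul]
          have hc2 : ((N - 2 : ℕ) : ℝ) = (N : ℝ) - 2 := by
            rw [Nat.cast_sub hN]; norm_num
          rw [hc2]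
        have hpair : ‖((ψ (x j s) (x i s) + ψ (x i s) (x j s)) • (x i s - x j s))‖
            ≤ 2 * K * ‖x i s - x j s‖ := by
          rw [norm_smul, Real.norm_eq_abs,
            abs_of_pos (add_pos (hψpos (x j s) (x i s)) (hψpos (x i s) (x j s)))]
          have := hψK (x j s) (x i s); have := hψK (x i s) (x j s)
          nlinarith
        have hKvM : K * ‖x i s - x j s‖ ≤ K * M := mul_le_mul_of_nonneg_left hvM hK.le
        calc ((N : ℝ) - 1)⁻¹ * ‖((ψ (x j s) (x i s) + ψ (x i s) (x j s)) • (x i s - x j s)) +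
              ∑ k ∈ (Finset.univ.erase i).erase j,
                (ψ (x j s) (x k s) • (x k s - x j s) - ψ (x i s) (x k s) • (x k s - x i s))‖
            ≤ ((N : ℝ) - 1)⁻¹ * (2 * K * ‖x i s - x j s‖ +
                ((N:ℝ) - 2) * (K * M + K * ‖x i s - x j s‖)) :=
              mul_le_mul_of_nonneg_left
                (le_trans (norm_add_le _ _) (add_le_add hpair hsum)) hcpos.le
          _ ≤ ((N : ℝ) - 1)⁻¹ * (((N:ℝ) - 1) * (K * ‖x i s - x j s‖ + K * M)) := by
              refine mul_le_mul_of_nonneg_left ?_ hcpos.le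
              nlinarith
          _ = K * ‖x i s - x j s‖ + K * M := inv_mul_cancel_left₀ hNne _
      have hgr := norm_le_gronwallBound_of_norm_deriv_right_le (hcont i j)
        (fun s hs => ((hdyn i s (Ico_subset_Icc_self hs)).sub
          (hdyn j s (Ico_subset_Icc_self hs))).hasDerivWithinAt)
        (hδle i j) bound t ht
      rw [gronwallBound_of_K_ne_0 (ne_of_gt hK)] at hgr
      simp only at hgr
      have hKM : K * M / K = M := by field_simp
      rw [hKM] at hgr
      exact le_trans hgr (by ring_nf; exact le_refl _)
  -- conclude
  have hMle : M ≤ δ * E + M * (E - 1) := by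
    obtain ⟨p, _, hp⟩ := Finset.exists_mem_eq_sup' huniv
      (fun p : Fin N × Fin N => ‖x p.1 (sp p) - x p.2 (sp p)‖)
    have h1 := key p.1 p.2 (sp p) (hsp p)
    have hexple : Real.exp (K * (sp p - ta)) ≤ E :=
      Real.exp_le_exp.mpr (by nlinarith [(hsp p).1, (hsp p).2])
    have hexp1 : 1 ≤ Real.exp (K * (sp p - ta)) := Real.one_le_exp (by nlinarith [(hsp p).1])
    rw [hMdef, hp]
    nlinarith
  have hMfinal : M ≤ E / (2 - E) * δ := by
    rw [div_mul_eq_mul_div, le_div_iff₀ (by linarith)]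
    nlinarith
  refine ciSup_le fun p => ?_
  exact le_trans (hM p.1 p.2 tb ⟨hab, le_refl tb⟩) hMfinal
end

section
/- For the Cucker–Smale system with positive interaction (α ≡ 1) on [t_a, t_b], x_i' = v_i, v_i' = (1/(N-1)) ∑_{j≠i} ψ̃(|x_i - x_j|)(v_j - v_i), with ψ̃ continuous, positive, bounded by K̃, one has for all i, j and all s, t ∈ [t_a, t_b]: |v_i(s) - v_j(t)| ≤ d_V(t_a), where d_V(t) := max_{i,j} |v_i(t) - v_j(t)|. In particular d_V(t_b) ≤ d_V(t_a). -/
open scoped RealInnerProductSpace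
open Set Filter Topology
open scoped Topology

/-- Key lemma: for any direction `e`, each `⟪v i s, e⟫` on `[ta, tb]` is bounded by the
maximum of the initial values `⟪v k ta, e⟫`. -/
lemma cs_inner_le {N d : ℕ} (hN : 2 ≤ N) {ta tb : ℝ}
    {ψ : ℝ → ℝ} (hψpos : ∀ r, 0 < ψ r)
    {x v : Fin N → ℝ → EuclideanSpace ℝ (Fin d)}
    (hv : ∀ i, ∀ s ∈ Set.Icc ta tb, HasDerivAt (v i)
      (((N : ℝ) - 1)⁻¹ • ∑ j ∈ Finset.univ.erase i,
        ψ ‖x i s - x j s‖ • (v j s - v i s)) s)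
    (e : EuclideanSpace ℝ (Fin d)) (hne : (Finset.univ : Finset (Fin N)).Nonempty) :
    ∀ i, ∀ s ∈ Set.Icc ta tb, ⟪v i s, e⟫ ≤
      Finset.univ.sup' hne (fun k => ⟪v k ta, e⟫) := by
  set f : Fin N → ℝ → ℝ := fun i t => ⟪v i t, e⟫ with hf_def
  have hNinv : (0:ℝ) ≤ ((N : ℝ) - 1)⁻¹ := by
    apply inv_nonneg.2
    have : (2:ℝ) ≤ (N:ℝ) := by exact_mod_cast hN
    linarith
  have hfd : ∀ i, ∀ s ∈ Set.Icc ta tb, HasDerivAt (f i)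
      (((N : ℝ) - 1)⁻¹ * ∑ j ∈ Finset.univ.erase i,
        ψ ‖x i s - x j s‖ * (f j s - f i s)) s := by
    intro i s hs
    have h := (hv i s hs).inner ℝ (hasDerivAt_const s e)
    simp only [inner_zero_right, zero_add, real_inner_smul_left, sum_inner,
      inner_sub_left] at h
    exact h
  have hfc : ∀ i, ContinuousOn (f i) (Set.Icc ta tb) := fun i t ht =>
    ((hfd i t ht).continuousAt).continuousWithinAt
  set g : ℝ → ℝ := fun t => Finset.univ.sup' hne (fun i => f i t) with hg_def
  have hgc : ContinuousOn g (Set.Icc ta tb) := by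
    intro t ht
    exact ContinuousWithinAt.finset_sup'_apply hne (fun i _ => hfc i t ht)
  have main : ∀ s ∈ Set.Icc ta tb, g s ≤ g ta := by
    have key := image_le_of_liminf_slope_right_le_deriv_boundary (f := g) (a := ta) (b := tb)
      (B := fun _ => g ta) (B' := fun _ => 0) hgc le_rfl continuousOn_const
      (fun s _ => hasDerivWithinAt_const s _ _)
      ?_
    · exact fun s hs => key hs
    intro s hs r hr
    have hsIcc : s ∈ Set.Icc ta tb := ⟨hs.1, hs.2.le⟩
    have hall : ∀ i, ∀ᶠ z in 𝓝[>] s, f i z - g s < r * (z - s) := by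
      intro i
      rcases eq_or_lt_of_le
        (Finset.le_sup' (fun k => f k s) (Finset.mem_univ i) : f i s ≤ g s) with hi | hi
      · -- `i` achieves the maximum at `s`: its derivative is nonpositive
        have hd := hfd i s hsIcc
        have hsum : (∑ j ∈ Finset.univ.erase i,
            ψ ‖x i s - x j s‖ * (f j s - f i s)) ≤ 0 := by
          apply Finset.sum_nonpos
          intro j _
          have hj : f j s ≤ f i s := by
            rw [hi]; exact Finset.le_sup' (fun k => f k s) (Finset.mem_univ j)
          have := (hψpos ‖x i s - x j s‖).le
          nlinarith
        have hderiv_le : (((N:ℝ)-1)⁻¹ * ∑ j ∈ Finset.univ.erase i,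
            ψ ‖x i s - x j s‖ * (f j s - f i s)) ≤ 0 := by
          have := mul_le_mul_of_nonneg_left hsum hNinv
          simpa using this
        have htend := hasDerivAt_iff_tendsto_slope.1 hd
        have h1 : ∀ᶠ z in 𝓝[≠] s, slope (f i) s z < r :=
          htend.eventually_lt_const (lt_of_le_of_lt hderiv_le hr)
        have h2 : ∀ᶠ z in 𝓝[>] s, slope (f i) s z < r :=
          h1.filter_mono (nhdsWithin_mono s (fun z hz => ne_of_gt hz))
        filter_upwards [h2, eventually_mem_nhdsWithin] with z hz hz'
        have hzs : 0 < z - s := sub_pos.2 hz'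
        rw [slope_def_field, div_lt_iff₀ hzs] at hz
        linarith [hz, hi.le]
      · -- `i` does not achieve the maximum at `s`
        have hc : ContinuousAt (f i) s := (hfd i s hsIcc).continuousAt
        have h1 : ∀ᶠ z in 𝓝 s, f i z < g s :=
          hc.eventually_lt continuousAt_const hi
        filter_upwards [nhdsWithin_le_nhds h1, eventually_mem_nhdsWithin] with z hz hz'
        have hzs : 0 < z - s := sub_pos.2 hz'
        have hr' : (0:ℝ) < r := hr
        nlinarith [mul_pos hr' hzs]
    have hall' : ∀ᶠ z in 𝓝[>] s, ∀ i, f i z - g s < r * (z - s) := eventually_all.2 hall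
    apply Filter.Eventually.frequently
    filter_upwards [hall', eventually_mem_nhdsWithin] with z hz hz'
    have hzs : 0 < z - s := sub_pos.2 hz'
    rw [slope_def_field, div_lt_iff₀ hzs]
    have hgz : g z < g s + r * (z - s) :=
      (Finset.sup'_lt_iff hne).2 (fun i _ => by linarith [hz i])
    linarith
  intro i s hs
  calc f i s ≤ g s := Finset.le_sup' (fun k => f k s) (Finset.mem_univ i)
    _ ≤ g ta := main s hs

theorem stmt_15 (N d : ℕ) (hN : 2 ≤ N) (hd : 1 ≤ d)
    (ta tb : ℝ) (hab : ta ≤ tb) (Kt : ℝ) (hK : 0 < Kt)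
    (ψ : ℝ → ℝ) (hψc : Continuous ψ) (hψpos : ∀ r, 0 < ψ r) (hψK : ∀ r, ψ r ≤ Kt)
    (x v : Fin N → ℝ → EuclideanSpace ℝ (Fin d))
    (hx : ∀ i, ∀ s ∈ Set.Icc ta tb, HasDerivAt (x i) (v i s) s)
    (hv : ∀ i, ∀ s ∈ Set.Icc ta tb, HasDerivAt (v i)
      (((N : ℝ) - 1)⁻¹ • ∑ j ∈ Finset.univ.erase i,
        ψ ‖x i s - x j s‖ • (v j s - v i s)) s) :
    (∀ i j : Fin N, ∀ s ∈ Set.Icc ta tb, ∀ u ∈ Set.Icc ta tb,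
        ‖v i s - v j u‖ ≤ ⨆ p : Fin N × Fin N, ‖v p.1 ta - v p.2 ta‖) ∧
      (⨆ p : Fin N × Fin N, ‖v p.1 tb - v p.2 tb‖) ≤
        ⨆ p : Fin N × Fin N, ‖v p.1 ta - v p.2 ta‖ := by
  haveI : NeZero N := ⟨by omega⟩
  have hne : (Finset.univ : Finset (Fin N)).Nonempty := Finset.univ_nonempty
  have hbdd : BddAbove (Set.range fun p : Fin N × Fin N => ‖v p.1 ta - v p.2 ta‖) :=
    Set.Finite.bddAbove (Set.finite_range _)
  have hS0 : 0 ≤ ⨆ p : Fin N × Fin N, ‖v p.1 ta - v p.2 ta‖ := by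
    have := le_ciSup hbdd (⟨0, 0⟩ : Fin N × Fin N)
    simpa using this
  have key : ∀ i j : Fin N, ∀ s ∈ Set.Icc ta tb, ∀ u ∈ Set.Icc ta tb,
      ‖v i s - v j u‖ ≤ ⨆ p : Fin N × Fin N, ‖v p.1 ta - v p.2 ta‖ := by
    intro i j s hs u hu
    set e := v i s - v j u with he
    rcases eq_or_ne e 0 with h0 | h0
    · rw [h0, norm_zero]; exact hS0
    have h1 := cs_inner_le hN hψpos hv e hne i s hs
    have h2 := cs_inner_le hN hψpos hv (-e) hne j u hu
    obtain ⟨p, -, hp⟩ := Finset.exists_mem_eq_sup' hne (fun k => ⟪v k ta, e⟫)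
    obtain ⟨q, -, hq⟩ := Finset.exists_mem_eq_sup' hne (fun k => ⟪v k ta, -e⟫)
    have expand : ⟪e, e⟫ = ⟪v i s, e⟫ + ⟪v j u, -e⟫ := by
      rw [he, inner_sub_left, inner_neg_right]; ring
    have hfin : ⟪v i s, e⟫ + ⟪v j u, -e⟫ ≤ ⟪v p ta, e⟫ + ⟪v q ta, -e⟫ := by
      linarith [h1.trans_eq hp, h2.trans_eq hq]
    have hpq : ⟪v p ta, e⟫ + ⟪v q ta, -e⟫ = ⟪v p ta - v q ta, e⟫ := by
      rw [inner_sub_left, inner_neg_right]; ring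
    have hsum : ⟪e, e⟫ ≤ ⟪v p ta - v q ta, e⟫ := by
      rw [expand, ← hpq]; exact hfin
    have hcs : ⟪v p ta - v q ta, e⟫ ≤ ‖v p ta - v q ta‖ * ‖e‖ := real_inner_le_norm _ _
    have hsq : ‖e‖ * ‖e‖ ≤ ‖v p ta - v q ta‖ * ‖e‖ := by
      rw [← real_inner_self_eq_norm_mul_norm]
      exact hsum.trans hcs
    have hepos : 0 < ‖e‖ := norm_pos_iff.2 h0
    have hle : ‖e‖ ≤ ‖v p ta - v q ta‖ := le_of_mul_le_mul_right hsq hepos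
    exact hle.trans (le_ciSup hbdd (⟨p, q⟩ : Fin N × Fin N))
  refine ⟨key, ?_⟩
  apply ciSup_le
  intro p
  exact key p.1 p.2 tb ⟨hab, le_rfl⟩ tb ⟨hab, le_rfl⟩
end

section
/- For the Cucker–Smale system with positive interaction on [t_{2n}, t_{2n+1}], suppose ψ̃(|x_i(t) - x_j(t)|) ≥ ψ̃_t := min{ψ̃(r) : r ∈ [0, max_{s∈[0,t]} d_X(s)]} > 0 for all i,j,t, and let T ≥ t_{2n+1}-t_{2n}, φ(t) := min{e^{-K̃T} ψ̃_t, e^{-K̃T}/T}. Then d_V(t_{2n+1}) ≤ (1 - ∫_{t_{2n}}^{t_{2n+1}} φ(s) ds) · d_V(t_{2n}), and the factor 1 - ∫ φ lies in (0,1). -/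
/-!
At every time, a pair `(i, j)` realising the velocity diameter satisfies
`d/dt ‖vᵢ - vⱼ‖² ≤ -2 ψ̃ₜ ‖vᵢ - vⱼ‖²`: projected on `vᵢ - vⱼ`, every other velocity lies between
`vⱼ` and `vᵢ`, so each interaction term pulls the two extreme agents together. A comparison
argument for the right Dini derivative of a maximum of finitely many differentiable functions
then gives `d_V(t_{2n+1}) ≤ exp (-∫ ρ) d_V(t_{2n})` for `ρ = min(ψ̃ₜ, 1/T)`. The rate `ψ̃ₜ` is
antitone in `t` (the maximal spread over `[0, t]` grows), hence integrable and approximable from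
below by continuous moving averages, which is all the comparison argument needs. Finally
`J = ∫ ρ ≤ K̃T`, so `exp (-J) ≤ 1 - e^{-K̃T} J = 1 - ∫ φ`, and `∫ φ ≤ e^{-K̃T} < 1`.
-/
open Set Filter MeasureTheory intervalIntegral
open scoped Topology RealInnerProductSpace

section MaxOfFinitelyMany

variable {ι : Type*} [Fintype ι] [Nonempty ι]

lemma continuousOn_ciSup {α : Type*} [TopologicalSpace α] {f : ι → α → ℝ} {s : Set α}
    (hf : ∀ i, ContinuousOn (f i) s) : ContinuousOn (fun t => ⨆ i, f i t) s := by
  simpa only [Finset.sup'_univ_eq_ciSup] using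
    ContinuousOn.finset_sup'_apply Finset.univ_nonempty fun i _ => hf i

lemma eventually_slope_ciSup_lt {q : ι → ℝ → ℝ} {q' : ι → ℝ} {s r : ℝ}
    (hq : ∀ i, HasDerivAt (q i) (q' i) s) (hr : ∀ i, (∀ j, q j s ≤ q i s) → q' i < r) :
    ∀ᶠ z in 𝓝[>] s, slope (fun t => ⨆ i, q i t) s z < r := by
  set Q : ℝ → ℝ := fun t => ⨆ i, q i t
  have hle : ∀ i t, q i t ≤ Q t := fun i t =>
    le_ciSup (f := fun j => q j t) (Finite.bddAbove_range _) i
  have hq_slope : ∀ i, ∀ᶠ z in 𝓝[>] s, (z - s)⁻¹ * (q i z - Q s) < r := by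
    intro i
    rcases (hle i s).lt_or_eq with hlt | heq
    · -- an inactive function stays below the maximum, so its slope to `Q s` tends to `-∞`
      have hinv : Tendsto (fun z => (z - s)⁻¹) (𝓝[>] s) atTop :=
        tendsto_inv_nhdsGT_zero.comp <| tendsto_nhdsWithin_iff.2
          ⟨((continuous_sub_right s).tendsto' s 0 (sub_self s)).mono_left nhdsWithin_le_nhds,
            eventually_mem_nhdsWithin.mono fun z hz => mem_Ioi.2 (sub_pos.2 hz)⟩
      have hgap : Tendsto (fun z => q i z - Q s) (𝓝[>] s) (𝓝 (q i s - Q s)) :=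
        ((hq i).continuousAt.tendsto.sub_const _).mono_left nhdsWithin_le_nhds
      exact (hinv.atTop_mul_neg (sub_neg.2 hlt) hgap).eventually_lt_atBot r
    · have hslope : Tendsto (slope (q i) s) (𝓝[>] s) (𝓝 (q' i)) :=
        (hasDerivAt_iff_tendsto_slope.mp (hq i)).mono_left
          (nhdsWithin_mono s fun z hz => ne_of_gt hz)
      refine (hslope.eventually (eventually_lt_nhds (hr i fun j => heq ▸ hle j s))).mono
        fun z hz => ?_
      rwa [← heq]
  filter_upwards [eventually_all.2 hq_slope] with z hz
  obtain ⟨i, hi⟩ := exists_eq_ciSup_of_finite (f := fun i => q i z)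
  change (z - s)⁻¹ * ((⨆ i, q i z) - Q s) < r
  rw [← hi]
  exact hz i

lemma ciSup_le_ciSup_of_hasDerivAt_nonpos {q q' : ι → ℝ → ℝ} {a b : ℝ} (hab : a ≤ b)
    (hq : ∀ i, ∀ t ∈ Icc a b, HasDerivAt (q i) (q' i t) t)
    (hmax : ∀ t ∈ Ico a b, ∀ i, (∀ j, q j t ≤ q i t) → q' i t ≤ 0) :
    ⨆ i, q i b ≤ ⨆ i, q i a := by
  have hcont : ContinuousOn (fun t => ⨆ i, q i t) (Icc a b) :=
    continuousOn_ciSup fun i t ht => (hq i t ht).continuousAt.continuousWithinAt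
  have hslope : ∀ t ∈ Ico a b, ∀ r, (0 : ℝ) < r →
      ∃ᶠ z in 𝓝[>] t, (z - t)⁻¹ * ((⨆ i, q i z) - ⨆ i, q i t) < r := fun t ht r hr =>
    (eventually_slope_ciSup_lt (fun i => hq i t (Ico_subset_Icc_self ht))
      fun i hi => (hmax t ht i hi).trans_lt hr).frequently
  simpa [gronwallBound_K0] using le_gronwallBound_of_liminf_deriv_right_le (K := 0) (ε := 0)
    hcont hslope le_rfl (fun _ _ => by simp) b (right_mem_Icc.2 hab)

end MaxOfFinitelyMany

lemma Antitone.sub_mul_le_integral {h : ℝ → ℝ} (hh : Antitone h) {s t : ℝ} (hst : s ≤ t) :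
    (t - s) * h t ≤ ∫ u in s..t, h u := by
  simpa using integral_mono_on hst intervalIntegrable_const
    (hh.intervalIntegrable (μ := volume)) fun u hu => hh hu.2

lemma Antitone.integral_le_sub_mul {h : ℝ → ℝ} (hh : Antitone h) {s t : ℝ} (hst : s ≤ t) :
    ∫ u in s..t, h u ≤ (t - s) * h s := by
  simpa using integral_mono_on hst (hh.intervalIntegrable (μ := volume))
    intervalIntegrable_const fun u hu => hh hu.1

lemma Antitone.exists_continuous_le_integral_le {h : ℝ → ℝ} (hh : Antitone h) {a b δ : ℝ}
    (hab : a ≤ b) (hδ : 0 < δ) :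
    ∃ m : ℝ → ℝ, Continuous m ∧ (∀ s, m s ≤ h s) ∧
      ∫ s in a..b, h s ≤ (∫ s in a..b, m s) + δ * (h a - h (b + δ)) := by
  have hint : ∀ s t, IntervalIntegrable h volume s t := fun _ _ => hh.intervalIntegrable
  have hδ_le : ∀ s, s ≤ s + δ := fun s => by linarith
  set m : ℝ → ℝ := fun s => δ⁻¹ * ∫ u in s..s + δ, h u
  have hm : Continuous m := by
    have hprim := continuous_primitive hint 0
    have hm_eq : m = fun s => δ⁻¹ * ((∫ u in (0 : ℝ)..s + δ, h u) - ∫ u in (0 : ℝ)..s, h u) := by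
      funext s
      rw [integral_interval_sub_left (hint _ _) (hint _ _)]
    rw [hm_eq]
    exact continuous_const.mul ((hprim.comp (continuous_add_const δ)).sub hprim)
  refine ⟨m, hm, fun s => ?_, ?_⟩
  · rw [inv_mul_le_iff₀ hδ]
    simpa using hh.integral_le_sub_mul (hδ_le s)
  · have hshift : ∫ s in a..b, h (s + δ) ≤ ∫ s in a..b, m s := by
      refine integral_mono_on hab (hh.comp_monotone (monotone_id.add_const δ)).intervalIntegrable
        (hm.intervalIntegrable _ _) fun s _ => ?_
      rw [le_inv_mul_iff₀ hδ]
      simpa [mul_comm] using hh.sub_mul_le_integral (hδ_le s)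
    have hsplit := integral_add_adjacent_intervals (hint a (a + δ)) (hint (a + δ) (b + δ))
    rw [← integral_add_adjacent_intervals (hint a b) (hint b (b + δ)),
      ← integral_comp_add_right] at hsplit
    have hleft := hh.integral_le_sub_mul (hδ_le a)
    have hright := hh.sub_mul_le_integral (hδ_le b)
    simp only [add_sub_cancel_left] at hleft hright
    linarith

section Decay

variable {ι E : Type*} [Fintype ι] [Nonempty ι] [NormedAddCommGroup E] [InnerProductSpace ℝ E]

lemma ciSup_norm_le_exp_neg_integral_mul {u u' : ι → ℝ → E} {ρ : ℝ → ℝ} {a b : ℝ}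
    (hab : a ≤ b) (hu : ∀ i, ∀ t ∈ Icc a b, HasDerivAt (u i) (u' i t) t) (hρ : Continuous ρ)
    (hmax : ∀ t ∈ Ico a b, ∀ i, (∀ j, ‖u j t‖ ≤ ‖u i t‖) →
      ⟪u' i t, u i t⟫ ≤ -(ρ t * ‖u i t‖ ^ 2)) :
    ⨆ i, ‖u i b‖ ≤ Real.exp (-∫ t in a..b, ρ t) * ⨆ i, ‖u i a‖ := by
  set G : ℝ → ℝ := fun t => ∫ s in a..t, ρ s
  have hG : ∀ t, HasDerivAt G (ρ t) t := fun t => (hρ.integral_hasStrictDerivAt a t).hasDerivAt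
  -- squares keep `‖u i t‖ * exp (G t)` differentiable where `u i t` vanishes
  set q : ι → ℝ → ℝ := fun i t => ‖u i t‖ ^ 2 * Real.exp (2 * G t)
  have hq : ∀ i, ∀ t ∈ Icc a b, HasDerivAt (q i)
      (2 * ⟪u i t, u' i t⟫ * Real.exp (2 * G t) +
        ‖u i t‖ ^ 2 * (Real.exp (2 * G t) * (2 * ρ t))) t :=
    fun i t ht => (hu i t ht).norm_sq.mul ((hG t).const_mul 2).exp
  have hq_sq : ∀ i t, q i t = (‖u i t‖ * Real.exp (G t)) ^ 2 := fun i t => by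
    simp only [q, mul_pow, ← Real.exp_nat_mul]
    norm_num
  have hsup := ciSup_le_ciSup_of_hasDerivAt_nonpos hab hq fun t ht i hi => by
    have hnorm : ∀ j, ‖u j t‖ ≤ ‖u i t‖ := fun j => by
      have hij := hi j
      rw [hq_sq, hq_sq, pow_le_pow_iff_left₀ (by positivity) (by positivity) two_ne_zero] at hij
      exact le_of_mul_le_mul_right hij (Real.exp_pos _)
    have := hmax t ht i hnorm
    rw [real_inner_comm] at this
    nlinarith [Real.exp_pos (2 * G t)]
  have hDa : 0 ≤ ⨆ i, ‖u i a‖ := Real.iSup_nonneg fun i => norm_nonneg _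
  refine ciSup_le fun i => ?_
  have hqa : ⨆ j, q j a ≤ (⨆ j, ‖u j a‖) ^ 2 := ciSup_le fun j => by
    simpa [q, G] using pow_le_pow_left₀ (norm_nonneg _)
      (le_ciSup (f := fun j => ‖u j a‖) (Finite.bddAbove_range _) j) 2
  have hqb : q i b ≤ (⨆ j, ‖u j a‖) ^ 2 :=
    (le_ciSup (f := fun j => q j b) (Finite.bddAbove_range _) i).trans (hsup.trans hqa)
  rw [hq_sq, pow_le_pow_iff_left₀ (by positivity) hDa two_ne_zero] at hqb
  rwa [Real.exp_neg, ← div_eq_inv_mul, le_div_iff₀ (Real.exp_pos _)]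

lemma ciSup_norm_le_exp_neg_integral_mul_of_antitoneOn {u u' : ι → ℝ → E} {ρ : ℝ → ℝ} {a b : ℝ}
    (hab : a ≤ b) (hu : ∀ i, ∀ t ∈ Icc a b, HasDerivAt (u i) (u' i t) t)
    (hρ : AntitoneOn ρ (Icc a b))
    (hmax : ∀ t ∈ Ico a b, ∀ i, (∀ j, ‖u j t‖ ≤ ‖u i t‖) →
      ⟪u' i t, u i t⟫ ≤ -(ρ t * ‖u i t‖ ^ 2)) :
    ⨆ i, ‖u i b‖ ≤ Real.exp (-∫ t in a..b, ρ t) * ⨆ i, ‖u i a‖ := by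
  set h : ℝ → ℝ := IccExtend hab fun t : Icc a b => ρ t
  have hh : Antitone h := fun s t hst =>
    hρ (projIcc a b hab s).2 (projIcc a b hab t).2 (monotone_projIcc hab hst)
  have hhρ : ∀ t ∈ Icc a b, h t = ρ t := fun t ht => IccExtend_of_mem hab _ ht
  have hint : ∫ t in a..b, h t = ∫ t in a..b, ρ t :=
    integral_congr fun t ht => hhρ t (uIcc_of_le hab ▸ ht)
  set Da := ⨆ i, ‖u i a‖
  have hDa : 0 ≤ Da := Real.iSup_nonneg fun i => norm_nonneg _
  have hδ : ∀ δ > 0, ⨆ i, ‖u i b‖ ≤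
      Real.exp (-(∫ t in a..b, ρ t) + δ * (ρ a - ρ b)) * Da := by
    intro δ hδ
    obtain ⟨m, hm, hmh, hint_m⟩ := hh.exists_continuous_le_integral_le hab hδ
    have hmρ : ∀ t ∈ Icc a b, m t ≤ ρ t := fun t ht => hhρ t ht ▸ hmh t
    refine (ciSup_norm_le_exp_neg_integral_mul hab hu hm fun t ht i hi => ?_).trans ?_
    · nlinarith [hmax t ht i hi, hmρ t (Ico_subset_Icc_self ht), sq_nonneg ‖u i t‖]
    · have hb : h (b + δ) = ρ b := IccExtend_of_right_le hab _ (by linarith)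
      rw [hint, hhρ a (left_mem_Icc.2 hab), hb] at hint_m
      gcongr
      linarith
  have hlim : Tendsto (fun δ => Real.exp (-(∫ t in a..b, ρ t) + δ * (ρ a - ρ b)) * Da)
      (𝓝[>] 0) (𝓝 (Real.exp (-(∫ t in a..b, ρ t) + 0 * (ρ a - ρ b)) * Da)) :=
    ((by fun_prop : Continuous fun δ : ℝ =>
      Real.exp (-(∫ t in a..b, ρ t) + δ * (ρ a - ρ b)) * Da).tendsto 0).mono_left
      nhdsWithin_le_nhds
  simpa using ge_of_tendsto hlim (eventually_mem_nhdsWithin.mono hδ)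

end Decay

section CuckerSmale

variable {ι E : Type*} [Fintype ι] [NormedAddCommGroup E] [InnerProductSpace ℝ E]

lemma inner_sum_smul_sub_sub_sum_smul_sub_le {w : ι → ι → ℝ} {ψ₀ : ℝ} (hw : ∀ k l, ψ₀ ≤ w k l)
    (V : ι → E) {i j : ι} (hmax : ∀ k l, ‖V k - V l‖ ≤ ‖V i - V j‖) :
    ⟪(∑ k, w i k • (V k - V i)) - ∑ k, w j k • (V k - V j), V i - V j⟫ ≤
      -(Fintype.card ι * ψ₀ * ‖V i - V j‖ ^ 2) := by
  set W := V i - V j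
  have hshift : ∀ k, ⟪V k - V j, W⟫ = ⟪V k - V i, W⟫ + ‖W‖ ^ 2 := fun k => by
    rw [← real_inner_self_eq_norm_sq, ← inner_add_left, sub_add_sub_cancel]
  have hneg : ∀ k, ⟪V k - V i, W⟫ ≤ 0 := fun k => by
    have := (real_inner_le_norm (V k - V j) W).trans
      (mul_le_mul_of_nonneg_right (hmax k j) (norm_nonneg _))
    rw [hshift] at this
    nlinarith
  have hpos : ∀ k, 0 ≤ ⟪V k - V j, W⟫ := fun k => by
    have := (real_inner_le_norm (V i - V k) W).trans
      (mul_le_mul_of_nonneg_right (hmax i k) (norm_nonneg _))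
    rw [← neg_sub, inner_neg_left] at this
    rw [hshift]
    nlinarith
  calc ⟪(∑ k, w i k • (V k - V i)) - ∑ k, w j k • (V k - V j), W⟫
      = ∑ k, w i k * ⟪V k - V i, W⟫ - ∑ k, w j k * ⟪V k - V j, W⟫ := by
        simp only [inner_sub_left, sum_inner, real_inner_smul_left]
    _ ≤ ∑ k, ψ₀ * ⟪V k - V i, W⟫ - ∑ k, ψ₀ * ⟪V k - V j, W⟫ :=
        sub_le_sub (Finset.sum_le_sum fun k _ => mul_le_mul_of_nonpos_right (hw i k) (hneg k))
          (Finset.sum_le_sum fun k _ => mul_le_mul_of_nonneg_right (hw j k) (hpos k))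
    _ = -(Fintype.card ι * ψ₀ * ‖W‖ ^ 2) := by
        simp only [hshift, mul_add, Finset.sum_add_distrib, Finset.sum_const, Finset.card_univ,
          nsmul_eq_mul]
        ring

variable [DecidableEq ι]

theorem cuckerSmale_velocity_diameter_le (hN : 1 < Fintype.card ι) (ψ : ℝ → ℝ)
    (x v : ι → ℝ → E) {a b : ℝ} (hab : a ≤ b)
    (hv : ∀ i, ∀ s ∈ Icc a b, HasDerivAt (v i)
      (((Fintype.card ι : ℝ) - 1)⁻¹ • ∑ j ∈ Finset.univ.erase i,
        ψ ‖x i s - x j s‖ • (v j s - v i s)) s)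
    {ρ : ℝ → ℝ} (hρ : AntitoneOn ρ (Icc a b)) (hρ₀ : ∀ s ∈ Icc a b, 0 ≤ ρ s)
    (hlow : ∀ i j, ∀ s ∈ Icc a b, ρ s ≤ ψ ‖x i s - x j s‖) :
    ⨆ p : ι × ι, ‖v p.1 b - v p.2 b‖ ≤
      Real.exp (-∫ s in a..b, ρ s) * ⨆ p : ι × ι, ‖v p.1 a - v p.2 a‖ := by
  have : Nonempty ι := Fintype.card_pos_iff.1 (by omega)
  have hN' : (1 : ℝ) < Fintype.card ι := by exact_mod_cast hN
  refine ciSup_norm_le_exp_neg_integral_mul_of_antitoneOn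
    (u := fun (p : ι × ι) t => v p.1 t - v p.2 t) hab
    (fun p t ht => (hv p.1 t ht).sub (hv p.2 t ht)) hρ ?_
  rintro t ht ⟨i, j⟩ hmax
  have ht' := Ico_subset_Icc_self ht
  have hsum : ∀ k, ∑ l ∈ Finset.univ.erase k, ψ ‖x k t - x l t‖ • (v l t - v k t) =
      ∑ l, ψ ‖x k t - x l t‖ • (v l t - v k t) := fun k =>
    Finset.sum_erase _ (by simp)
  have hcs := inner_sum_smul_sub_sub_sum_smul_sub_le (fun k l => hlow k l t ht') (fun k => v k t)
    fun k l => hmax (k, l)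
  simp only [hsum, ← smul_sub, real_inner_smul_left]
  rw [inv_mul_le_iff₀ (by linarith)]
  nlinarith [mul_nonneg (hρ₀ t ht') (sq_nonneg ‖v i t - v j t‖)]

end CuckerSmale

lemma antitoneOn_sInf_image_Icc_sSup_image_Icc {ψ f : ℝ → ℝ} {a b : ℝ} (ha : 0 ≤ a)
    (hψ : BddBelow (range ψ)) (hf₀ : ∀ u, 0 ≤ f u) (hf : BddAbove (f '' Icc a b)) :
    AntitoneOn (fun s => sInf (ψ '' Icc 0 (sSup (f '' Icc 0 s)))) (Icc a b) := by
  have hsInf : AntitoneOn (fun M => sInf (ψ '' Icc 0 M)) (Ici 0) := fun M hM M' _ hMM' =>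
    csInf_le_csInf (hψ.mono (image_subset_range _ _)) ((nonempty_Icc.2 hM).image ψ)
      (image_mono (Icc_subset_Icc_right hMM'))
  have hsSup : MonotoneOn (fun s => sSup (f '' Icc 0 s)) (Icc a b) := by
    intro s hs s' hs' hss'
    by_cases hbdd : BddAbove (f '' Icc 0 s')
    · exact csSup_le_csSup hbdd ((nonempty_Icc.2 (ha.trans hs.1)).image f)
        (image_mono (Icc_subset_Icc_right hss'))
    · have hcover : Icc 0 s' ⊆ Icc 0 s ∪ Icc a b := fun u hu =>
        (le_or_gt u s).imp (fun h => ⟨hu.1, h⟩) fun h => ⟨hs.1.trans h.le, hu.2.trans hs'.2⟩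
      have hbdd' : ¬BddAbove (f '' Icc 0 s) := fun h =>
        hbdd ((h.union hf).mono (image_union f _ _ ▸ image_mono hcover))
      simp only [Real.sSup_of_not_bddAbove hbdd, Real.sSup_of_not_bddAbove hbdd', le_refl]
  exact hsInf.comp_MonotoneOn hsSup fun s _ =>
    mem_Ici.2 (Real.sSup_nonneg (forall_mem_image.2 fun u _ => hf₀ u))

lemma exp_neg_le_one_sub_exp_neg_mul {J L : ℝ} (hJ : 0 ≤ J) (hJL : J ≤ L) :
    Real.exp (-J) ≤ 1 - Real.exp (-L) * J := by
  have hexp : Real.exp (-J) * (J + 1) ≤ 1 := by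
    calc Real.exp (-J) * (J + 1) ≤ Real.exp (-J) * Real.exp J := by
          gcongr
          exact Real.add_one_le_exp J
      _ = 1 := by rw [← Real.exp_add, neg_add_cancel, Real.exp_zero]
  nlinarith [Real.exp_le_exp.2 (neg_le_neg hJL)]

lemma exp_neg_integral_le_one_sub_mul_integral_and_mem_Ioo {ρ : ℝ → ℝ} {a b T K : ℝ} (hab : a < b)
    (hT : 0 < T) (hbaT : b - a ≤ T) (hK : 0 < K) (hρ : IntervalIntegrable ρ volume a b)
    (hρ₀ : ∀ s ∈ Ioo a b, 0 < ρ s) (hρK : ∀ s ∈ Icc a b, ρ s ≤ K)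
    (hρT : ∀ s ∈ Icc a b, ρ s ≤ 1 / T) :
    Real.exp (-∫ s in a..b, ρ s) ≤ 1 - Real.exp (-K * T) * ∫ s in a..b, ρ s ∧
      1 - Real.exp (-K * T) * ∫ s in a..b, ρ s ∈ Ioo 0 1 := by
  set J := ∫ s in a..b, ρ s
  have hJ_pos : 0 < J := intervalIntegral_pos_of_pos_on hρ hρ₀ hab
  have hJ_le_KT : J ≤ K * T := by
    have := integral_mono_on hab.le hρ intervalIntegrable_const hρK
    rw [intervalIntegral.integral_const, smul_eq_mul] at this
    nlinarith
  have hJ_le_one : J ≤ 1 := by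
    have := integral_mono_on hab.le hρ intervalIntegrable_const hρT
    rw [intervalIntegral.integral_const, smul_eq_mul, mul_one_div] at this
    linarith [(div_le_one hT).2 hbaT]
  have hc : Real.exp (-K * T) < 1 := Real.exp_lt_one_iff.2 (by nlinarith)
  have hcJ : Real.exp (-K * T) * J ≤ Real.exp (-K * T) :=
    mul_le_of_le_one_right (Real.exp_pos _).le hJ_le_one
  refine ⟨by simpa only [neg_mul] using exp_neg_le_one_sub_exp_neg_mul hJ_pos.le hJ_le_KT,
    by linarith, by nlinarith [Real.exp_pos (-K * T)]⟩

theorem stmt_16_general (N d : ℕ) (hN : 2 ≤ N)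
    (ta tb T Kt : ℝ) (h0a : 0 ≤ ta) (hab : ta < tb) (hK : 0 < Kt)
    (hTpos : 0 < T) (hTlen : tb - ta ≤ T)
    (ψ : ℝ → ℝ) (hψpos : ∀ r, 0 < ψ r) (hψK : ∀ r, ψ r ≤ Kt)
    (x v : Fin N → ℝ → EuclideanSpace ℝ (Fin d))
    (hx : ∀ i, ∀ s ∈ Set.Icc ta tb, HasDerivAt (x i) (v i s) s)
    (hv : ∀ i, ∀ s ∈ Set.Icc ta tb, HasDerivAt (v i)
      (((N : ℝ) - 1)⁻¹ • ∑ j ∈ Finset.univ.erase i,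
        ψ ‖x i s - x j s‖ • (v j s - v i s)) s)
    (ψt : ℝ → ℝ)
    (hψt : ∀ s : ℝ, ψt s = sInf (ψ '' Set.Icc 0
      (sSup ((fun u => ⨆ p : Fin N × Fin N, ‖x p.1 u - x p.2 u‖) '' Set.Icc 0 s))))
    (hψtpos : ∀ s ∈ Set.Icc ta tb, 0 < ψt s)
    (hlow : ∀ i j : Fin N, ∀ s ∈ Set.Icc ta tb, ψt s ≤ ψ ‖x i s - x j s‖)
    (φ : ℝ → ℝ)
    (hφ : ∀ s : ℝ, φ s = min (Real.exp (-Kt * T) * ψt s) (Real.exp (-Kt * T) / T)) :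
    (⨆ p : Fin N × Fin N, ‖v p.1 tb - v p.2 tb‖) ≤
        (1 - ∫ s in ta..tb, φ s) * ⨆ p : Fin N × Fin N, ‖v p.1 ta - v p.2 ta‖ ∧
      (1 - ∫ s in ta..tb, φ s) ∈ Set.Ioo (0:ℝ) 1 := by
  have : Nonempty (Fin N) := ⟨⟨0, by omega⟩⟩
  have hψt_anti : AntitoneOn ψt (Icc ta tb) := by
    rw [show ψt = _ from funext hψt]
    refine antitoneOn_sInf_image_Icc_sSup_image_Icc h0a
      ⟨0, forall_mem_range.2 fun r => (hψpos r).le⟩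
      (fun u => Real.iSup_nonneg fun _ => norm_nonneg _)
      (isCompact_Icc.image_of_continuousOn (continuousOn_ciSup fun p => ?_)).bddAbove
    exact ((continuousOn_of_forall_continuousAt fun s hs => (hx p.1 s hs).continuousAt).sub
      (continuousOn_of_forall_continuousAt fun s hs => (hx p.2 s hs).continuousAt)).norm
  set ρ : ℝ → ℝ := fun s => min (ψt s) (1 / T)
  have hρ_anti : AntitoneOn ρ (Icc ta tb) := fun s hs s' hs' hss' =>
    min_le_min_right _ (hψt_anti hs hs' hss')
  have hρ_pos : ∀ s ∈ Icc ta tb, 0 < ρ s := fun s hs => lt_min (hψtpos s hs) (by positivity)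
  have hdecay := cuckerSmale_velocity_diameter_le (by rw [Fintype.card_fin]; omega) ψ x v hab.le
    (by simpa using hv) hρ_anti (fun s hs => (hρ_pos s hs).le)
    fun i j s hs => (min_le_left _ _).trans (hlow i j s hs)
  have hφρ : ∫ s in ta..tb, φ s = Real.exp (-Kt * T) * ∫ s in ta..tb, ρ s := by
    rw [← intervalIntegral.integral_const_mul]
    exact integral_congr fun s _ => by
      rw [hφ, mul_min_of_nonneg _ _ (Real.exp_pos _).le, mul_one_div]
  obtain ⟨hexp, hfactor⟩ := exp_neg_integral_le_one_sub_mul_integral_and_mem_Ioo hab hTpos hTlen hK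
    (uIcc_of_le hab.le ▸ hρ_anti).intervalIntegrable (fun s hs => hρ_pos s (Ioo_subset_Icc_self hs))
    (fun s hs => ((min_le_left _ _).trans
      (hlow (Classical.arbitrary _) (Classical.arbitrary _) s hs)).trans (hψK _))
    fun s _ => min_le_right _ _
  rw [hφρ]
  exact ⟨hdecay.trans (mul_le_mul_of_nonneg_right hexp (Real.iSup_nonneg fun _ => norm_nonneg _)),
    hfactor⟩

theorem stmt_16 (N d : ℕ) (hN : 2 ≤ N) (hd : 1 ≤ d)
    (ta tb T Kt : ℝ) (h0a : 0 ≤ ta) (hab : ta < tb) (hK : 0 < Kt)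
    (hTpos : 0 < T) (hTlen : tb - ta ≤ T)
    (ψ : ℝ → ℝ) (hψc : Continuous ψ) (hψpos : ∀ r, 0 < ψ r) (hψK : ∀ r, ψ r ≤ Kt)
    (x v : Fin N → ℝ → EuclideanSpace ℝ (Fin d))
    (hx : ∀ i, ∀ s ∈ Set.Icc ta tb, HasDerivAt (x i) (v i s) s)
    (hv : ∀ i, ∀ s ∈ Set.Icc ta tb, HasDerivAt (v i)
      (((N : ℝ) - 1)⁻¹ • ∑ j ∈ Finset.univ.erase i,
        ψ ‖x i s - x j s‖ • (v j s - v i s)) s)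
    (ψt : ℝ → ℝ)
    (hψt : ∀ s : ℝ, ψt s = sInf (ψ '' Set.Icc 0
      (sSup ((fun u => ⨆ p : Fin N × Fin N, ‖x p.1 u - x p.2 u‖) '' Set.Icc 0 s))))
    (hψtpos : ∀ s ∈ Set.Icc ta tb, 0 < ψt s)
    (hlow : ∀ i j : Fin N, ∀ s ∈ Set.Icc ta tb, ψt s ≤ ψ ‖x i s - x j s‖)
    (φ : ℝ → ℝ)
    (hφ : ∀ s : ℝ, φ s = min (Real.exp (-Kt * T) * ψt s) (Real.exp (-Kt * T) / T)) :
    (⨆ p : Fin N × Fin N, ‖v p.1 tb - v p.2 tb‖) ≤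
        (1 - ∫ s in ta..tb, φ s) * ⨆ p : Fin N × Fin N, ‖v p.1 ta - v p.2 ta‖ ∧
      (1 - ∫ s in ta..tb, φ s) ∈ Set.Ioo (0:ℝ) 1 :=
  stmt_16_general N d hN ta tb T Kt h0a hab hK hTpos hTlen ψ hψpos hψK x v hx hv ψt hψt hψtpos hlow
    φ hφ
end
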